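/- arXiv:1403.4706 — 9 statements merged into one kernel-verified Lean document; each statement's English description precedes it below -/
import Mathlib

section
/- If there exists an integer i ≥ 1 with s(i) = 0, then the least such integer i₀ belongs to the set {1, 2, 3, 5}. -/
section
variable {p : ℕ} {a : ℤ} {s : ℕ → ℤ}

private lemma cat0 (hs0 : s 0 = 1) (hs1 : s 1 = a)
    (hrec : ∀ m : ℕ, s (m + 2) = a * s (m + 1) - (p : ℤ) * s m) :
    ∀ k : ℕ, s (k+1)^2 - s k * s (k+2) = (p:ℤ)^(k+1) := by
  intro k
  induction k with
  | zero =>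
    have h := hrec 0
    rw [hs0, show (0:ℕ)+1 = 1 from rfl, hs1] at h ⊢
    rw [h]; ring
  | succ n ih =>
    have h1 := hrec n
    have h2 := hrec (n+1)
    rw [show n+1+1 = n+2 from rfl] at h2 ⊢
    linear_combination (p:ℤ) * ih - s (n+1) * h2 + s (n+2) * h1

private lemma add0 (hs0 : s 0 = 1) (hs1 : s 1 = a)
    (hrec : ∀ m : ℕ, s (m + 2) = a * s (m + 1) - (p : ℤ) * s m) :
    ∀ k j : ℕ, s (j+k+2) = s (j+1) * s (k+1) - (p:ℤ) * s j * s k := by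
  have key : ∀ k : ℕ, (∀ j, s (j+k+2) = s (j+1) * s (k+1) - (p:ℤ) * s j * s k)
      ∧ (∀ j, s (j+(k+1)+2) = s (j+1) * s ((k+1)+1) - (p:ℤ) * s j * s (k+1)) := by
    intro k
    induction k with
    | zero =>
      constructor
      · intro j
        rw [show j+0+2 = j+2 from by omega, show (0:ℕ)+1 = 1 from rfl, hs0, hs1, hrec j]
        ring
      · intro j
        have h1 := hrec (j+1)
        have h0 := hrec j
        have hq := hrec 0
        rw [show (0:ℕ)+1 = 1 from rfl, hs0, hs1] at hq
        rw [show j+1+1 = j+2 from rfl] at h1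
        rw [show j+(0+1)+2 = j+1+2 from by omega, show (0:ℕ)+1+1 = 2 from rfl,
          show (0:ℕ)+1 = 1 from rfl, hs1]
        linear_combination h1 + a * h0 - s (j+1) * hq
    | succ n ih =>
      refine ⟨ih.2, fun j => ?_⟩
      have h1 := hrec (j+n+2)
      have h2 := ih.2 j
      have h3 := ih.1 j
      have h4 := hrec (n+1)
      have h5 := hrec n
      rw [show j+n+2+2 = j+(n+1+1)+2 from by omega,
          show j+n+2+1 = j+(n+1)+2 from by omega] at h1
      rw [show n+1+1 = n+2 from rfl] at h4
      rw [show n+1+1+1 = n+1+2 from rfl]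
      linear_combination h1 + a * h2 - (p:ℤ) * h3 - s (j+1) * h4 + ((p:ℤ) * s j) * h5
  exact fun k j => (key k).1 j

private lemma mod0 (hs0 : s 0 = 1) (hs1 : s 1 = a)
    (hrec : ∀ m : ℕ, s (m + 2) = a * s (m + 1) - (p : ℤ) * s m) :
    ∀ k : ℕ, (p:ℤ) ∣ s k - a^k := by
  have key : ∀ k : ℕ, ((p:ℤ) ∣ s k - a^k) ∧ ((p:ℤ) ∣ s (k+1) - a^(k+1)) := by
    intro k
    induction k with
    | zero => exact ⟨by simp [hs0], by simp [hs1]⟩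
    | succ n ih =>
      refine ⟨ih.2, ?_⟩
      obtain ⟨c, hc⟩ := ih.2
      refine ⟨a * c - s n, ?_⟩
      have h := hrec n
      rw [show n+1+1 = n+2 from rfl]
      linear_combination h + a * hc
  exact fun k => (key k).1
end

/-- If there exists an integer `i ≥ 1` with `s i = 0`, then the least such
integer `i₀` belongs to `{1, 2, 3, 5}`.  Here `s` is the sequence
`s 0 = 1`, `s 1 = a`, `s (m+2) = a * s (m+1) - p * s m`. -/
theorem stmt_0 (p : ℕ) (hp : p.Prime) (a : ℤ) (s : ℕ → ℤ)
    (hs0 : s 0 = 1) (hs1 : s 1 = a)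
    (hrec : ∀ m : ℕ, s (m + 2) = a * s (m + 1) - (p : ℤ) * s m)
    (i₀ : ℕ) (hi₀ : IsLeast {i : ℕ | 1 ≤ i ∧ s i = 0} i₀) :
    i₀ = 1 ∨ i₀ = 2 ∨ i₀ = 3 ∨ i₀ = 5 := by
  obtain ⟨⟨hi1, hiz⟩, hmin⟩ := hi₀
  by_cases hle : i₀ ≤ 3
  · omega
  · push_neg at hle
    have hppos : (0:ℤ) < (p:ℤ) := by exact_mod_cast hp.pos
    have hp0 : (p:ℤ) ≠ 0 := hppos.ne'
    obtain ⟨k, rfl⟩ : ∃ k, i₀ = k + 4 := ⟨i₀ - 4, by omega⟩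
    -- s (k+3)^2 = p^(k+3)
    have h1 := cat0 hs0 hs1 hrec (k+3)
    have h2 := hrec (k+3)
    rw [show k+3+1 = k+4 from rfl, show k+3+2 = k+5 from rfl] at h1 h2
    have h3 : (p:ℤ) * s (k+3)^2 = (p:ℤ)^(k+4) := by
      linear_combination h1 + s (k+3) * h2 - (s (k+4) - a * s (k+3)) * hiz
    have hsq : s (k+3)^2 = (p:ℤ)^(k+3) :=
      mul_left_cancel₀ hp0 (by rw [h3]; ring)
    -- parity : k+3 is even
    have hnat : (s (k+3)).natAbs ^ 2 = p ^ (k+3) := by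
      have h := congrArg Int.natAbs hsq
      rwa [Int.natAbs_pow, Int.natAbs_pow, Int.natAbs_natCast] at h
    obtain ⟨e, _, hm⟩ := (Nat.dvd_prime_pow hp).mp
      (dvd_trans (dvd_pow_self _ two_ne_zero) (dvd_of_eq hnat))
    have h2e : e * 2 = k + 3 := by
      apply Nat.pow_right_injective hp.two_le
      show p ^ (e*2) = p ^ (k+3)
      rw [pow_mul, ← hm, hnat]
    obtain ⟨u, rfl⟩ : ∃ u, k = 2*u + 1 := ⟨e - 2, by omega⟩
    -- V_{u+2} = 0 : s (u+3) = p * s (u+1)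
    have hadd := add0 hs0 hs1 hrec (u+1) (u+2)
    have hz : s ((u+2)+(u+1)+2) = 0 := by
      rw [show (u+2)+(u+1)+2 = 2*u+1+4 from by omega]; exact hiz
    rw [show (u+2)+1 = u+3 from rfl, show (u+1)+1 = u+2 from rfl] at hadd
    have hfact : s (u+2) * (s (u+3) - (p:ℤ) * s (u+1)) = 0 := by
      linear_combination hz - hadd
    have hsu2 : s (u+2) ≠ 0 := by
      intro h0
      have := hmin (Set.mem_setOf.mpr ⟨by omega, h0⟩)
      omega
    have hVz : s (u+3) = (p:ℤ) * s (u+1) := by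
      rcases mul_eq_zero.mp hfact with h | h
      · exact absurd h hsu2
      · linarith
    have hrr := hrec (u+1)
    rw [show u+1+2 = u+3 from rfl, show u+1+1 = u+2 from rfl] at hrr
    have ha2 : a * s (u+2) = 2*(p:ℤ)*s (u+1) := by linear_combination hVz - hrr
    have hcat := cat0 hs0 hs1 hrec (u+1)
    rw [show u+1+1 = u+2 from rfl, show u+1+2 = u+3 from rfl] at hcat
    have hI : s (u+2)^2 - (p:ℤ) * s (u+1)^2 = (p:ℤ)^(u+2) := by
      linear_combination hcat + s (u+1) * hVz
    have hKey : (4*(p:ℤ) - a^2) * s (u+2)^2 = 4 * (p:ℤ)^(u+3) := by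
      linear_combination 4*(p:ℤ)*hI - (a * s (u+2) + 2*(p:ℤ)*s (u+1)) * ha2
    -- p ∣ a
    have hprime : Prime (p:ℤ) := Nat.prime_iff_prime_int.mp hp
    have hpa : (p:ℤ) ∣ a := by
      have hdvd : (p:ℤ) ∣ a^2 * s (u+2)^2 :=
        ⟨4 * s (u+2)^2 - 4 * (p:ℤ)^(u+2), by linear_combination -hKey⟩
      rcases hprime.dvd_mul.mp hdvd with h | h
      · exact hprime.dvd_of_dvd_pow h
      · have hs := hprime.dvd_of_dvd_pow h
        have hm2 := mod0 hs0 hs1 hrec (u+2)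
        have : (p:ℤ) ∣ a^(u+2) := by
          have := dvd_sub hs hm2
          simpa using this
        exact hprime.dvd_of_dvd_pow this
    have ha0 : a ≠ 0 := by
      intro h0
      have hs10 : s 1 = 0 := by rw [hs1, h0]
      have := hmin (Set.mem_setOf.mpr ⟨le_refl 1, hs10⟩)
      omega
    have hs2pos : 0 < s (u+2)^2 := pow_two_pos_of_ne_zero hsu2
    have hd : 0 < 4*(p:ℤ) - a^2 := by
      by_contra h
      push_neg at h
      have hnp : (4*(p:ℤ) - a^2) * s (u+2)^2 ≤ 0 :=
        mul_nonpos_of_nonpos_of_nonneg h (sq_nonneg _)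
      rw [hKey] at hnp
      linarith [pow_pos hppos (u+3)]
    obtain ⟨c, hc⟩ := hpa
    have hc0 : c ≠ 0 := by rintro rfl; simp at hc; exact ha0 hc
    have h1c : 1 ≤ c^2 := by
      have := pow_two_pos_of_ne_zero hc0
      linarith
    have hp2le : (2:ℤ) ≤ (p:ℤ) := by exact_mod_cast hp.two_le
    have hc1 : c^2 = 1 := by
      by_contra hne
      have h2c : 2 ≤ c^2 := Int.lt_iff_add_one_le.mp (lt_of_le_of_ne h1c (Ne.symm hne))
      have e : a^2 = (p:ℤ)^2 * c^2 := by rw [hc]; ring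
      have e1 : (p:ℤ)^2 * 2 ≤ (p:ℤ)^2 * c^2 :=
        mul_le_mul_of_nonneg_left h2c (sq_nonneg _)
      have e2 : 4*(p:ℤ) ≤ (p:ℤ)^2 * 2 := by nlinarith [mul_nonneg hppos.le (sub_nonneg.mpr hp2le)]
      linarith [hd]
    have ha2p : a^2 = (p:ℤ)^2 := by
      rw [hc]; linear_combination (p:ℤ)^2 * hc1
    have hp4 : (p:ℤ) < 4 := by
      by_contra h
      push_neg at h
      have h44 := mul_le_mul_of_nonneg_left h hppos.le
      have hpp : (p:ℤ)^2 = (p:ℤ)*(p:ℤ) := sq (p:ℤ)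
      linarith [hd, ha2p]
    have hp23 : p = 2 ∨ p = 3 := by
      have h2 := hp.two_le
      have : p < 4 := by exact_mod_cast hp4
      omega
    rcases hp23 with hp2 | hp3
    · exfalso
      subst hp2
      have ha4 : a^2 = 4 := by rw [ha2p]; norm_num
      have hs3 : s 3 = 0 := by
        have h0 := hrec 0
        have h1 := hrec 1
        rw [show (0:ℕ)+1 = 1 from rfl, show (0:ℕ)+2 = 2 from rfl, hs0, hs1] at h0
        rw [show (1:ℕ)+1 = 2 from rfl, show (1:ℕ)+2 = 3 from rfl, hs1] at h1
        push_cast at h0 h1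
        linear_combination h1 + a*h0 + a*ha4
      have := hmin (Set.mem_setOf.mpr ⟨by norm_num, hs3⟩)
      omega
    · subst hp3
      have ha9 : a^2 = 9 := by rw [ha2p]; norm_num
      have hs5 : s 5 = 0 := by
        have h0 := hrec 0
        have h1 := hrec 1
        have h2 := hrec 2
        have h3 := hrec 3
        rw [show (0:ℕ)+1 = 1 from rfl, show (0:ℕ)+2 = 2 from rfl, hs0, hs1] at h0
        rw [show (1:ℕ)+1 = 2 from rfl, show (1:ℕ)+2 = 3 from rfl, hs1] at h1
        rw [show (2:ℕ)+1 = 3 from rfl, show (2:ℕ)+2 = 4 from rfl] at h2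
        rw [show (3:ℕ)+1 = 4 from rfl, show (3:ℕ)+2 = 5 from rfl] at h3
        push_cast at h0 h1 h2 h3
        linear_combination h3 + a*h2 + (a^2-3)*h1 + (a^3 - 6*a)*h0 + (a^3 - 3*a)*ha9
      have := hmin (Set.mem_setOf.mpr ⟨by norm_num, hs5⟩)
      right; right; right; omega
end

section
/- Suppose there exists an integer i ≥ 1 with s(i) = 0, and let i₀ be the least such integer. Then s(i) = 0 for every integer i ≥ 1 such that i₀ + 1 divides i + 1. -/
/-- If `i₀` is the least integer `i ≥ 1` with `s i = 0`, then `s i = 0` for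
every `i ≥ 1` with `(i₀ + 1) ∣ (i + 1)`.  Here `s` is the sequence
`s 0 = 1`, `s 1 = a`, `s (m+2) = a * s (m+1) - p * s m`. -/
theorem stmt_1 (p : ℕ) (hp : p.Prime) (a : ℤ) (s : ℕ → ℤ)
    (hs0 : s 0 = 1) (hs1 : s 1 = a)
    (hrec : ∀ m : ℕ, s (m + 2) = a * s (m + 1) - (p : ℤ) * s m)
    (i₀ : ℕ) (hi₀ : IsLeast {i : ℕ | 1 ≤ i ∧ s i = 0} i₀) :
    ∀ i : ℕ, 1 ≤ i → (i₀ + 1) ∣ (i + 1) → s i = 0 := by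
  obtain ⟨⟨hi₀1, hszero⟩, _⟩ := hi₀
  -- shifted sequence is proportional to s
  have key : ∀ m : ℕ, s (i₀ + 1 + m) = s (i₀ + 1) * s m := by
    intro m
    induction m using Nat.strong_induction_on with
    | _ m ih =>
      match m with
      | 0 => simp [hs0]
      | 1 =>
        have := hrec i₀
        rw [hszero] at this
        have h1 : i₀ + 2 = i₀ + 1 + 1 := by omega
        rw [h1] at this
        simp [this, hs1, mul_comm]
      | (m + 2) =>
        have e1 := ih m (by omega)
        have e2 := ih (m + 1) (by omega)
        have h3 : i₀ + 1 + (m + 2) = (i₀ + 1 + m) + 2 := by ring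
        rw [h3, hrec (i₀ + 1 + m)]
        have h4 : i₀ + 1 + m + 1 = i₀ + 1 + (m + 1) := by ring
        rw [h4, e1, e2, hrec m]
        ring
  -- main induction along multiples
  have main : ∀ k : ℕ, 1 ≤ k → s ((i₀ + 1) * k - 1) = 0 := by
    intro k hk
    induction k with
    | zero => omega
    | succ k ih =>
      rcases Nat.eq_or_lt_of_le hk with h | h
      · have : (i₀ + 1) * 1 - 1 = i₀ := by omega
        rw [← h]; rw [this]; exact hszero
      · have hk1 : 1 ≤ k := by omega
        have h5 : (i₀ + 1) * (k + 1) - 1 = i₀ + 1 + ((i₀ + 1) * k - 1) := by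
          have : 1 ≤ (i₀ + 1) * k := Nat.one_le_iff_ne_zero.mpr (by positivity)
          cases k with
          | zero => omega
          | succ n => ring_nf; omega
        rw [h5, key, ih hk1, mul_zero]
  intro i hi ⟨k, hk⟩
  have hk1 : 1 ≤ k := by nlinarith
  have : i = (i₀ + 1) * k - 1 := by omega
  rw [this]; exact main k hk1
end

section
/- Suppose there exists an integer i ≥ 1 with s(i) = 0, and let i₀ be the least such integer. Then for every integer i ≥ 1 with s(i) = 0, one has that i₀ + 1 divides i + 1. -/
/-- If `i₀` is the least integer `i ≥ 1` with `s i = 0`, then for every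
`i ≥ 1` with `s i = 0` one has `(i₀ + 1) ∣ (i + 1)`.  Here `s` is the
sequence `s 0 = 1`, `s 1 = a`, `s (m+2) = a * s (m+1) - p * s m`. -/
theorem stmt_2 (p : ℕ) (hp : p.Prime) (a : ℤ) (s : ℕ → ℤ)
    (hs0 : s 0 = 1) (hs1 : s 1 = a)
    (hrec : ∀ m : ℕ, s (m + 2) = a * s (m + 1) - (p : ℤ) * s m)
    (i₀ : ℕ) (hi₀ : IsLeast {i : ℕ | 1 ≤ i ∧ s i = 0} i₀) :
    ∀ i : ℕ, 1 ≤ i → s i = 0 → (i₀ + 1) ∣ (i + 1) := by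
  intro i hi1 hsi
  obtain ⟨⟨hi₀1, hsi₀⟩, hmin⟩ := hi₀
  set c : ℤ := -(p : ℤ) * s (i₀ - 1) with hc
  have hprev : s (i₀ - 1) ≠ 0 := by
    rcases Nat.eq_or_lt_of_le hi₀1 with h | h
    · have : i₀ - 1 = 0 := by omega
      rw [this, hs0]; norm_num
    · intro h0
      have := hmin ⟨by omega, h0⟩
      omega
  have hc0 : c ≠ 0 := by
    have hpne : (p : ℤ) ≠ 0 := Int.natCast_ne_zero.mpr hp.pos.ne'
    exact mul_ne_zero (neg_ne_zero.mpr hpne) hprev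
  have h0 : s (i₀ + 1) = c := by
    have h := hrec (i₀ - 1)
    have e1 : i₀ - 1 + 2 = i₀ + 1 := by omega
    have e2 : i₀ - 1 + 1 = i₀ := by omega
    rw [e1, e2, hsi₀] at h
    rw [h, hc]; ring
  have h1 : s (i₀ + 2) = c * a := by
    have h := hrec i₀
    rw [hsi₀, h0] at h
    rw [h]; ring
  have hshift2 : ∀ j, s (j + (i₀ + 1)) = c * s j ∧ s (j + 1 + (i₀ + 1)) = c * s (j + 1) := by
    intro j
    induction j with
    | zero =>
      constructor
      · rw [zero_add, h0, hs0]; ring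
      · have e : 0 + 1 + (i₀ + 1) = i₀ + 2 := by omega
        rw [e, h1, hs1]
    | succ n ih =>
      refine ⟨ih.2, ?_⟩
      have h := hrec (n + (i₀ + 1))
      have e1 : n + (i₀ + 1) + 2 = n + 1 + 1 + (i₀ + 1) := by omega
      have e2 : n + (i₀ + 1) + 1 = n + 1 + (i₀ + 1) := by omega
      rw [e1, e2, ih.1, ih.2] at h
      rw [h, hrec n]; ring
  have hshift : ∀ j, s (j + (i₀ + 1)) = c * s j := fun j => (hshift2 j).1
  have hpow : ∀ q j, s (j + q * (i₀ + 1)) = c ^ q * s j := by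
    intro q
    induction q with
    | zero => intro j; simp
    | succ n ih =>
      intro j
      have e : j + (n + 1) * (i₀ + 1) = (j + n * (i₀ + 1)) + (i₀ + 1) := by ring
      rw [e, hshift, ih, pow_succ]; ring
  set q := (i + 1) / (i₀ + 1) with hq
  set r := (i + 1) % (i₀ + 1) with hr
  have hdecomp : i + 1 = q * (i₀ + 1) + r := by
    rw [hq, hr, Nat.mul_comm]
    exact (Nat.div_add_mod _ _).symm
  have hrlt : r < i₀ + 1 := Nat.mod_lt _ (by omega)
  rcases Nat.eq_zero_or_pos r with h | h
  · exact ⟨q, by rw [hdecomp, h]; ring⟩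
  · exfalso
    have e : i = (r - 1) + q * (i₀ + 1) := by omega
    have hz : s (r - 1) = 0 := by
      have := hpow q (r - 1)
      rw [← e, hsi] at this
      have hcq : (c : ℤ) ^ q ≠ 0 := pow_ne_zero _ hc0
      exact (mul_eq_zero.mp this.symm).resolve_left hcq
    rcases Nat.eq_zero_or_pos (r - 1) with h1 | h1
    · rw [h1, hs0] at hz; norm_num at hz
    · have := hmin ⟨h1, hz⟩
      omega
end

section
/- Let σ > 0 be a real number. If s(i) ≠ 0 for all i ≥ 1, then Σ_{m=0}^∞ a⁰(p^m)·p^{−mσ} = (1 − p^{−σ})^{−1}. If there exists i ≥ 1 with s(i) = 0 and i₀ is the least such integer, then Σ_{m=0}^∞ a⁰(p^m)·p^{−mσ} = p^σ·( 1/(p^σ − 1) − 1/(p^{(i₀+1)σ} − 1) ). -/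
/-!
If `s k = 0` for some `k ≥ 1`, the shifted sequence `m ↦ s (m + k + 1)` satisfies the same
recurrence with initial values `s (k + 1)` and `a * s (k + 1)`, hence equals `s (k + 1) * s`.
For the least such `k` we have `s (k + 1) = -p * s (k - 1) ≠ 0`, so the zero set of `s` is
periodic with period `k + 1`, and on `[0, k]` it is `{k}`. The sum `F = ∑ a⁰(p^m) x^m` with
`x = p^{-σ}` therefore satisfies `F = (1 + x + ⋯ + x^{k-1}) + x^{k+1} F`.
-/

open Finset

section LinearRecurrence

variable {R : Type*} [CommRing R] {a b : R} {s : ℕ → R}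

theorem shift_eq_mul_of_eq_zero (hs0 : s 0 = 1) (hs1 : s 1 = a)
    (hrec : ∀ m, s (m + 2) = a * s (m + 1) - b * s m) {k : ℕ} (hk : s k = 0) :
    ∀ m, s (m + (k + 1)) = s (k + 1) * s m
  | 0 => by rw [hs0, mul_one, zero_add]
  | 1 => by rw [hs1, add_comm, hrec, hk, mul_zero, sub_zero, mul_comm]
  | m + 2 => by
    rw [show m + 2 + (k + 1) = m + (k + 1) + 2 by omega, hrec, hrec,
      show m + (k + 1) + 1 = m + 1 + (k + 1) by omega,
      shift_eq_mul_of_eq_zero hs0 hs1 hrec hk m, shift_eq_mul_of_eq_zero hs0 hs1 hrec hk (m + 1)]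
    ring

theorem eq_zero_iff_of_isLeast [Nontrivial R] (hs0 : s 0 = 1) {k : ℕ}
    (hk : IsLeast {i | 1 ≤ i ∧ s i = 0} k) {m : ℕ} (hm : m ≤ k) : s m = 0 ↔ m = k := by
  refine ⟨fun hsm => le_antisymm hm (hk.2 ⟨Nat.one_le_iff_ne_zero.2 ?_, hsm⟩), ?_⟩
  · rintro rfl
    exact one_ne_zero (hs0 ▸ hsm)
  · rintro rfl
    exact hk.1.2

theorem succ_ne_zero_of_isLeast [IsDomain R] (hb : b ≠ 0) (hs0 : s 0 = 1)
    (hrec : ∀ m, s (m + 2) = a * s (m + 1) - b * s m) {k : ℕ}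
    (hk : IsLeast {i | 1 ≤ i ∧ s i = 0} k) : s (k + 1) ≠ 0 := by
  obtain ⟨j, rfl⟩ : ∃ j, k = j + 1 := Nat.exists_eq_add_of_le' hk.1.1
  have hj : s j ≠ 0 := fun h => by
    simpa using (eq_zero_iff_of_isLeast hs0 hk (Nat.le_succ j)).1 h
  rw [hrec, hk.1.2, mul_zero, zero_sub, neg_ne_zero]
  exact mul_ne_zero hb hj

theorem eq_zero_add_iff_of_isLeast [IsDomain R] (hb : b ≠ 0) (hs0 : s 0 = 1) (hs1 : s 1 = a)
    (hrec : ∀ m, s (m + 2) = a * s (m + 1) - b * s m) {k : ℕ}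
    (hk : IsLeast {i | 1 ≤ i ∧ s i = 0} k) (m : ℕ) : s (m + (k + 1)) = 0 ↔ s m = 0 := by
  rw [shift_eq_mul_of_eq_zero hs0 hs1 hrec hk.1.2, mul_eq_zero,
    or_iff_right (succ_ne_zero_of_isLeast hb hs0 hrec hk)]

end LinearRecurrence

theorem tsum_eq_div_of_add_eq_mul {K : Type*} [Field K] [TopologicalSpace K]
    [IsTopologicalRing K] [T2Space K] {f : ℕ → K} (hf : Summable f) {n : ℕ} {c : K}
    (hc : c ≠ 1) (h : ∀ m, f (m + n) = c * f m) :
    ∑' m, f m = (∑ m ∈ range n, f m) / (1 - c) := by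
  have key := hf.sum_add_tsum_nat_add n
  simp_rw [h, tsum_mul_left] at key
  rw [eq_div_iff (sub_ne_zero.2 hc.symm)]
  linear_combination -key

theorem geom_sum_div_one_sub_pow_succ {K : Type*} [Field K] {x : K} (h0 : x ≠ 0) (h1 : x ≠ 1)
    {k : ℕ} (hk : x ^ (k + 1) ≠ 1) :
    (∑ i ∈ range k, x ^ i) / (1 - x ^ (k + 1)) =
      x⁻¹ * (1 / (x⁻¹ - 1) - 1 / (x⁻¹ ^ (k + 1) - 1)) := by
  rw [geom_sum_eq h1, inv_pow]
  field_simp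
  ring

/-- Let `σ > 0`.  If `s i ≠ 0` for all `i ≥ 1` then
`Σ_{m=0}^∞ a⁰(p^m) p^{-mσ} = (1 - p^{-σ})⁻¹`, and if `i₀` is the least
`i ≥ 1` with `s i = 0` then
`Σ_{m=0}^∞ a⁰(p^m) p^{-mσ} = p^σ (1/(p^σ - 1) - 1/(p^{(i₀+1)σ} - 1))`.
Here `a⁰(p^m)` is `1` if `s m ≠ 0` and `0` if `s m = 0`, where `s` is the
sequence `s 0 = 1`, `s 1 = a`, `s (m+2) = a * s (m+1) - p * s m`. -/
theorem stmt_3 (p : ℕ) (hp : p.Prime) (a : ℤ) (s : ℕ → ℤ)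
    (hs0 : s 0 = 1) (hs1 : s 1 = a)
    (hrec : ∀ m : ℕ, s (m + 2) = a * s (m + 1) - (p : ℤ) * s m)
    (σ : ℝ) (hσ : 0 < σ) :
    ((∀ i : ℕ, 1 ≤ i → s i ≠ 0) →
      ∑' m : ℕ, (if s m = 0 then (0 : ℝ) else 1) * (p : ℝ) ^ (-(m : ℝ) * σ) =
        (1 - (p : ℝ) ^ (-σ))⁻¹) ∧
    (∀ i₀ : ℕ, IsLeast {i : ℕ | 1 ≤ i ∧ s i = 0} i₀ →
      ∑' m : ℕ, (if s m = 0 then (0 : ℝ) else 1) * (p : ℝ) ^ (-(m : ℝ) * σ) =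
        (p : ℝ) ^ σ *
          (1 / ((p : ℝ) ^ σ - 1) - 1 / ((p : ℝ) ^ (((i₀ : ℝ) + 1) * σ) - 1))) := by
  have hp0 : (0 : ℝ) ≤ p := p.cast_nonneg
  set x := (p : ℝ) ^ (-σ)
  have hx0 : 0 < x := Real.rpow_pos_of_pos (mod_cast hp.pos) _
  have hx1 : x < 1 := Real.rpow_lt_one_of_one_lt_of_neg (mod_cast hp.one_lt) (neg_neg_of_pos hσ)
  have hterm (m : ℕ) : (p : ℝ) ^ (-(m : ℝ) * σ) = x ^ m := by
    rw [neg_mul, ← mul_neg, mul_comm, Real.rpow_mul_natCast hp0]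
  simp_rw [hterm]
  refine ⟨fun hne => ?_, fun k hk => ?_⟩
  · have hone : ∀ m, s m ≠ 0
      | 0 => by simp [hs0]
      | m + 1 => hne _ m.succ_pos
    simp only [hone, if_false, one_mul]
    exact tsum_geometric_of_lt_one hx0.le hx1
  · have hsum : Summable fun m : ℕ => (if s m = 0 then (0 : ℝ) else 1) * x ^ m :=
      (summable_geometric_of_lt_one hx0.le hx1).of_nonneg_of_le (fun m => by positivity)
        (fun m => mul_le_of_le_one_left (pow_nonneg hx0.le m) (by split_ifs <;> norm_num))
    have hxk : x ^ (k + 1) < 1 := pow_lt_one₀ hx0.le hx1 k.succ_ne_zero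
    have hperiod (m : ℕ) : (if s (m + (k + 1)) = 0 then (0 : ℝ) else 1) * x ^ (m + (k + 1)) =
        x ^ (k + 1) * ((if s m = 0 then (0 : ℝ) else 1) * x ^ m) := by
      simp only [eq_zero_add_iff_of_isLeast (mod_cast hp.ne_zero) hs0 hs1 hrec hk, pow_add]
      ring
    have hinit : ∀ m ∈ range k, (if s m = 0 then (0 : ℝ) else 1) * x ^ m = x ^ m := fun m hm =>
      by rw [if_neg (mt (eq_zero_iff_of_isLeast hs0 hk (mem_range.1 hm).le).1
        (mem_range.1 hm).ne), one_mul]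
    have hy : (p : ℝ) ^ σ = x⁻¹ := by simp only [x, Real.rpow_neg hp0, inv_inv]
    have hyk : (p : ℝ) ^ (((k : ℝ) + 1) * σ) = x⁻¹ ^ (k + 1) := by
      rw [mul_comm, ← Nat.cast_add_one, Real.rpow_mul_natCast hp0, hy]
    rw [tsum_eq_div_of_add_eq_mul hsum hxk.ne hperiod, sum_range_succ, if_pos hk.1.2, zero_mul,
      add_zero, sum_congr rfl hinit, hy, hyk,
      geom_sum_div_one_sub_pow_succ hx0.ne' hx1.ne hxk.ne]
end

section
/- Suppose there exists an integer i ≥ 1 with s(i) = 0, and let i₀ be the least such integer. Let v ≥ 0 be an integer and let k₀ be the least integer ≥ (v+1)/(i₀+1). Then for every real σ > 0, Σ_{m=0}^∞ a⁰(p^{m+v})·p^{−mσ} = p^σ·( 1/(p^σ − 1) − p^{(v − (k₀−1)(i₀+1))σ}/(p^{(i₀+1)σ} − 1) ). -/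
/-- Let `i₀` be the least integer `i ≥ 1` with `s i = 0`, let `v ≥ 0` and let
`k₀` be the least integer `≥ (v+1)/(i₀+1)`.  Then for every real `σ > 0`,
`Σ_{m=0}^∞ a⁰(p^{m+v}) p^{-mσ}
  = p^σ (1/(p^σ - 1) - p^{(v - (k₀-1)(i₀+1))σ}/(p^{(i₀+1)σ} - 1))`.
Here `a⁰(p^m)` is `1` if `s m ≠ 0` and `0` if `s m = 0`, where `s` is the
sequence `s 0 = 1`, `s 1 = a`, `s (m+2) = a * s (m+1) - p * s m`. -/
theorem stmt_4 (p : ℕ) (hp : p.Prime) (a : ℤ) (s : ℕ → ℤ)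
    (hs0 : s 0 = 1) (hs1 : s 1 = a)
    (hrec : ∀ m : ℕ, s (m + 2) = a * s (m + 1) - (p : ℤ) * s m)
    (i₀ : ℕ) (hi₀ : IsLeast {i : ℕ | 1 ≤ i ∧ s i = 0} i₀)
    (v : ℕ) (k₀ : ℕ)
    (hk₀ : IsLeast {k : ℕ | ((v : ℝ) + 1) / ((i₀ : ℝ) + 1) ≤ (k : ℝ)} k₀)
    (σ : ℝ) (hσ : 0 < σ) :
    ∑' m : ℕ, (if s (m + v) = 0 then (0 : ℝ) else 1) * (p : ℝ) ^ (-(m : ℝ) * σ) =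
      (p : ℝ) ^ σ *
        (1 / ((p : ℝ) ^ σ - 1) -
          (p : ℝ) ^ (((v : ℝ) - ((k₀ : ℝ) - 1) * ((i₀ : ℝ) + 1)) * σ) /
            ((p : ℝ) ^ (((i₀ : ℝ) + 1) * σ) - 1)) := by
  obtain ⟨⟨hi1, hsi0⟩, hmin⟩ := hi₀
  obtain ⟨hk1, hkmin⟩ := hk₀
  simp only [Set.mem_setOf_eq] at hk1
  set q : ℕ := i₀ + 1 with hqdef
  obtain ⟨j, hj⟩ : ∃ j, i₀ = j + 1 := ⟨i₀ - 1, by omega⟩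
  have hsnz : ∀ r : ℕ, r < i₀ → s r ≠ 0 := by
    intro r hr
    rcases Nat.eq_zero_or_pos r with h0 | h1
    · rw [h0, hs0]; norm_num
    · intro h; have := hmin ⟨h1, h⟩; omega
  set c : ℤ := s q with hcdef
  have hc0 : c ≠ 0 := by
    have hq2 : s q = a * s (j + 1) - (p : ℤ) * s j := by
      rw [hqdef, hj]; exact hrec j
    have hji : s (j + 1) = 0 := by rw [← hj]; exact hsi0
    rw [hcdef, hq2, hji, mul_zero, zero_sub, neg_ne_zero]
    exact mul_ne_zero (by exact_mod_cast hp.ne_zero) (hsnz j (by omega))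
  -- periodicity : s(m+q) = c * s m
  have hper : ∀ m, s (m + q) = c * s m := by
    have key : ∀ m, s (m + q) = c * s m ∧ s (m + 1 + q) = c * s (m + 1) := by
      intro m
      induction m with
      | zero =>
        constructor
        · show s (0 + q) = c * s 0
          rw [hs0, mul_one, Nat.zero_add]
        · have e : 0 + 1 + q = j + 1 + 2 := by omega
          rw [e, hrec]
          have e2 : j + 1 + 1 = q := by omega
          have e3 : j + 1 = i₀ := by omega
          rw [e2, e3, hsi0, mul_zero, sub_zero, ← hcdef]
          show a * c = c * s 1
          rw [hs1, mul_comm]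
      | succ m ih =>
        refine ⟨ih.2, ?_⟩
        have e : m + 1 + 1 + q = m + q + 2 := by omega
        have e2 : m + q + 1 = m + 1 + q := by omega
        rw [e, hrec, e2, ih.2, ih.1, hrec m]
        ring
    exact fun m => (key m).1
  have hpow : ∀ t r, s (q * t + r) = c ^ t * s r := by
    intro t
    induction t with
    | zero => intro r; simp
    | succ t ih =>
      intro r
      have e : q * (t + 1) + r = q * t + r + q := by rw [Nat.mul_succ]; omega
      rw [e, hper, ih, pow_succ]
      ring
  -- characterization of zeros
  have hchar : ∀ m, s m = 0 ↔ q ∣ (m + 1) := by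
    intro m
    have hq0 : 0 < q := by omega
    have hdm := Nat.div_add_mod m q
    constructor
    · intro h
      have hmod : s (m % q) = 0 := by
        have := hpow (m / q) (m % q)
        rw [hdm, h] at this
        rcases mul_eq_zero.1 this.symm with h1 | h1
        · exact absurd h1 (pow_ne_zero _ hc0)
        · exact h1
      have hrlt : m % q < q := Nat.mod_lt _ hq0
      have hri : m % q = i₀ := by
        by_contra hne
        exact hsnz _ (by omega) hmod
      refine ⟨m / q + 1, ?_⟩
      have : q * (m / q + 1) = q * (m / q) + q := by rw [Nat.mul_succ]
      rw [this]
      omega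
    · rintro ⟨k, hk⟩
      obtain ⟨k', rfl⟩ : ∃ k', k = k' + 1 := by
        refine ⟨k - 1, ?_⟩
        have : k ≠ 0 := by rintro rfl; simp at hk
        omega
      have hmul : q * (k' + 1) = q * k' + q := by rw [Nat.mul_succ]
      have hm : m = q * k' + i₀ := by omega
      rw [hm, hpow, hsi0, mul_zero]
  -- facts about k₀
  have hiR : ((i₀ : ℝ) + 1) = (q : ℝ) := by push_cast [hqdef]; ring
  have hqR : (0 : ℝ) < (q : ℝ) := by positivity
  have hk01 : 1 ≤ k₀ := by
    by_contra h
    have hz : k₀ = 0 := by omega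
    rw [hz, hiR] at hk1
    have h2 : (0:ℝ) < ((v:ℝ)+1)/(q:ℝ) := by positivity
    simp only [Nat.cast_zero] at hk1
    linarith
  have hge : v + 1 ≤ q * k₀ := by
    rw [hiR, div_le_iff₀ hqR] at hk1
    have h2 : ((v + 1 : ℕ) : ℝ) ≤ ((q * k₀ : ℕ) : ℝ) := by
      rw [Nat.cast_mul, mul_comm]
      exact_mod_cast hk1
    exact_mod_cast h2
  have hlt : q * (k₀ - 1) ≤ v := by
    by_contra h
    push_neg at h
    have hmem : ((v : ℝ) + 1) / ((i₀ : ℝ) + 1) ≤ ((k₀ - 1 : ℕ) : ℝ) := by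
      rw [hiR, div_le_iff₀ hqR]
      have h2 : ((v + 1 : ℕ) : ℝ) ≤ ((q * (k₀ - 1) : ℕ) : ℝ) := by exact_mod_cast h
      rw [Nat.cast_mul, mul_comm] at h2
      exact_mod_cast h2
    have := hkmin hmem
    omega
  set m₀ : ℕ := q * k₀ - (v + 1) with hm₀def
  have hm₀ : m₀ + (v + 1) = q * k₀ := by omega
  have hm₀lt : m₀ < q := by
    obtain ⟨k', hk'⟩ : ∃ k', k₀ = k' + 1 := ⟨k₀ - 1, by omega⟩
    have h1 : q * (k' + 1) = q * k' + q := by rw [Nat.mul_succ]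
    rw [hk'] at hm₀ hlt
    have h2 : k' + 1 - 1 = k' := by omega
    rw [h2] at hlt
    omega
  set n : ℕ := q - 1 - m₀ with hndef
  have hn : m₀ + n + 1 = q := by omega
  -- divisibility description of the exceptional set
  have hdiv : ∀ m : ℕ, q ∣ (m + v + 1) ↔ ∃ jj, m = m₀ + q * jj := by
    intro m
    constructor
    · rintro ⟨k, hk⟩
      have hkk : k₀ ≤ k := by
        by_contra h
        push_neg at h
        have hnm : ¬ (((v : ℝ) + 1) / ((i₀ : ℝ) + 1) ≤ (k : ℝ)) := by
          intro hh
          exact absurd (hkmin hh) (by omega)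
        rw [hiR, div_le_iff₀ hqR, not_le] at hnm
        have h2 : ((q * k : ℕ) : ℝ) < ((v + 1 : ℕ) : ℝ) := by
          rw [Nat.cast_mul, mul_comm]
          exact_mod_cast hnm
        have h3 : q * k < v + 1 := by exact_mod_cast h2
        omega
      refine ⟨k - k₀, ?_⟩
      obtain ⟨d, rfl⟩ : ∃ d, k = k₀ + d := ⟨k - k₀, by omega⟩
      have h1 : q * (k₀ + d) = q * k₀ + q * d := by rw [Nat.mul_add]
      have h2 : k₀ + d - k₀ = d := by omega
      rw [h2]
      omega
    · rintro ⟨jj, rfl⟩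
      refine ⟨k₀ + jj, ?_⟩
      rw [Nat.mul_add]
      omega
  -- real/analytic part
  have hp0 : (0 : ℝ) < (p : ℝ) := by exact_mod_cast hp.pos
  have hp1 : (1 : ℝ) < (p : ℝ) := by exact_mod_cast hp.one_lt
  set x : ℝ := (p : ℝ) ^ (-σ) with hxdef
  have hx0 : 0 < x := Real.rpow_pos_of_pos hp0 _
  have hx1 : x < 1 := Real.rpow_lt_one_of_one_lt_of_neg hp1 (by linarith)
  have hterm : ∀ m : ℕ, (p : ℝ) ^ (-(m : ℝ) * σ) = x ^ m := by
    intro m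
    rw [hxdef, ← Real.rpow_natCast ((p:ℝ) ^ (-σ)) m, ← Real.rpow_mul hp0.le]
    congr 1
    ring
  have hf : Summable (fun m : ℕ => x ^ m) := summable_geometric_of_lt_one hx0.le hx1
  set g : ℕ → ℝ := fun m => if q ∣ (m + v + 1) then x ^ m else 0 with hgdef
  have hgm : ∀ m, g m = if q ∣ (m + v + 1) then x ^ m else 0 := fun m => rfl
  have hg : Summable g := by
    refine Summable.of_nonneg_of_le (fun m => ?_) (fun m => ?_) hf
    · rw [hgm]; split
      · positivity
      · exact le_rfl
    · rw [hgm]; split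
      · exact le_rfl
      · positivity
  have hbody : ∀ m : ℕ, (if s (m + v) = 0 then (0:ℝ) else 1) * (p : ℝ) ^ (-(m : ℝ) * σ)
      = x ^ m - g m := by
    intro m
    rw [hterm]
    by_cases h : q ∣ (m + v + 1)
    · have hz : s (m + v) = 0 := (hchar (m + v)).2 h
      simp [hgdef, h, hz]
    · have hz : s (m + v) ≠ 0 := fun hh => h ((hchar (m + v)).1 hh)
      simp [hgdef, h, hz]
  rw [tsum_congr hbody, Summable.tsum_sub hf hg, tsum_geometric_of_lt_one hx0.le hx1]
  -- compute tsum g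
  have hxq1 : x ^ q < 1 := pow_lt_one₀ hx0.le hx1 (by omega)
  have hinj : Function.Injective (fun jj : ℕ => m₀ + q * jj) := by
    intro a b hab
    simp only at hab
    have : q * a = q * b := by omega
    exact Nat.eq_of_mul_eq_mul_left (by omega) this
  have hsupp : Function.support g ⊆ Set.range (fun jj : ℕ => m₀ + q * jj) := by
    intro m hm
    have hd : q ∣ (m + v + 1) := by
      by_contra hnd
      exact hm (by rw [hgm, if_neg hnd])
    obtain ⟨jj, hjj⟩ := (hdiv m).1 hd
    exact ⟨jj, hjj.symm⟩
  have hgsum : ∑' m, g m = x ^ m₀ * (1 - x ^ q)⁻¹ := by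
    rw [← Function.Injective.tsum_eq hinj hsupp]
    have hcong : ∀ jj : ℕ, g (m₀ + q * jj) = x ^ m₀ * (x ^ q) ^ jj := by
      intro jj
      have hd : q ∣ (m₀ + q * jj + v + 1) := (hdiv _).2 ⟨jj, rfl⟩
      rw [hgm, if_pos hd, pow_add, ← pow_mul]
    rw [tsum_congr hcong, tsum_mul_left, tsum_geometric_of_lt_one (by positivity) hxq1]
  rw [hgsum]
  -- final algebra
  set y : ℝ := (p : ℝ) ^ σ with hydef
  have hy1 : 1 < y := Real.one_lt_rpow_iff_of_pos hp0 |>.2 (Or.inl ⟨hp1, hσ⟩)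
  have hy0 : (0:ℝ) < y := by linarith
  have hxy : x = y⁻¹ := by rw [hxdef, hydef, Real.rpow_neg hp0.le]
  have hexp1 : ((v : ℝ) - ((k₀ : ℝ) - 1) * ((i₀ : ℝ) + 1)) = (n : ℝ) := by
    have h1 : ((m₀ : ℝ) + ((v:ℝ) + 1)) = (q:ℝ) * (k₀:ℝ) := by exact_mod_cast hm₀
    have h2 : ((m₀:ℝ) + (n:ℝ) + 1) = (q:ℝ) := by exact_mod_cast hn
    rw [hiR]
    linear_combination h1 - h2
  have hexp2 : (p:ℝ) ^ (((v : ℝ) - ((k₀ : ℝ) - 1) * ((i₀ : ℝ) + 1)) * σ) = y ^ n := by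
    rw [hexp1, mul_comm, Real.rpow_mul hp0.le, ← hydef, Real.rpow_natCast]
  have hexp3 : (p:ℝ) ^ (((i₀ : ℝ) + 1) * σ) = y ^ q := by
    rw [hiR, mul_comm, Real.rpow_mul hp0.le, ← hydef, Real.rpow_natCast]
  rw [hexp2, hexp3, hxy]
  have hyne : y ≠ 0 := ne_of_gt hy0
  have hy1ne : y - 1 ≠ 0 := by linarith
  have hyq1 : 1 < y ^ q := one_lt_pow₀ hy1 (by omega)
  have hyqne : y ^ q - 1 ≠ 0 := by linarith
  have A : (1:ℝ) - y⁻¹ = (y - 1)/y := by field_simp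
  have B : (1:ℝ) - (y⁻¹) ^ q = (y ^ q - 1)/y ^ q := by
    rw [inv_pow]
    field_simp
  rw [inv_pow, B, A, inv_div, inv_div]
  have hysub : y ^ q = y ^ m₀ * y ^ n * y := by rw [← hn, pow_add, pow_add, pow_one]
  rw [hysub]
  have h1 : y ^ m₀ ≠ 0 := pow_ne_zero _ hyne
  have h2 : y ^ n ≠ 0 := pow_ne_zero _ hyne
  have h3 : y ^ m₀ * y ^ n * y - 1 ≠ 0 := by rw [← hysub]; exact hyqne
  field_simp
end

section
/- Suppose there exists an integer i ≥ 1 with s(i) = 0, and let i₀ be the least such integer. Let v ≥ 0 be an integer and let k₀ be the least integer ≥ (v+1)/(i₀+1). Then ( Σ_{m=0}^∞ a⁰(p^{m+v})·p^{−m} ) / ( Σ_{m=0}^∞ a⁰(p^m)·p^{−m} ) = ( 1 + p + p² + ⋯ + p^{i₀} − p^{v − (k₀−1)(i₀+1)} ) / ( p + p² + ⋯ + p^{i₀} ); in particular both series converge and the denominator series is positive. -/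
/-!
Putting `s i₀ = 0` into the addition formula `s (m + n + 2) = s (m + 1) s (n + 1) - p s m s n`
gives `s (n + i₀ + 1) = s (i₀ + 1) s n`, and `s (i₀ + 1) = -p s (i₀ - 1) ≠ 0`. Hence `s m = 0`
exactly when `m ≡ i₀ mod (i₀ + 1)`, so both series are geometric series in `1/p` with one
residue class removed, summable in closed form. Finally `k₀ = ⌊v / (i₀ + 1)⌋ + 1`, so the
exponent `v - (k₀ - 1)(i₀ + 1)` is `v mod (i₀ + 1)`.
-/

open Finset

structure IsHeckeRecurrence {R : Type*} [CommRing R] (a c : R) (s : ℕ → R) : Prop where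
  zero : s 0 = 1
  one : s 1 = a
  add_two : ∀ m, s (m + 2) = a * s (m + 1) - c * s m

namespace IsHeckeRecurrence

variable {R : Type*} [CommRing R] {a c : R} {s : ℕ → R}

theorem add_add_two (hs : IsHeckeRecurrence a c s) (m n : ℕ) :
    s (m + n + 2) = s (m + 1) * s (n + 1) - c * s m * s n := by
  induction m generalizing n with
  | zero => rw [hs.zero, hs.one, zero_add, hs.add_two]; ring
  | succ m ih =>
    rw [show m + 1 + n + 2 = m + (n + 1) + 2 by omega, ih, hs.add_two n, hs.add_two m]
    ring

theorem add_succ_of_eq_zero (hs : IsHeckeRecurrence a c s) {i : ℕ} (hi : s i = 0) (n : ℕ) :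
    s (n + (i + 1)) = s (i + 1) * s n := by
  rcases n with _ | n
  · rw [zero_add, hs.zero, mul_one]
  · rw [show n + 1 + (i + 1) = i + n + 2 by omega, hs.add_add_two, hi]
    ring

theorem add_mul_of_eq_zero (hs : IsHeckeRecurrence a c s) {i : ℕ} (hi : s i = 0) (r k : ℕ) :
    s (r + (i + 1) * k) = s (i + 1) ^ k * s r := by
  induction k with
  | zero => simp
  | succ k ih => rw [mul_add_one, ← add_assoc, hs.add_succ_of_eq_zero hi, ih, pow_succ']; ring

variable [IsDomain R]

theorem eq_zero_iff_modEq (hs : IsHeckeRecurrence a c s) (hc : c ≠ 0) {i₀ : ℕ}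
    (hi₀ : IsLeast {i : ℕ | 1 ≤ i ∧ s i = 0} i₀) (m : ℕ) :
    s m = 0 ↔ m ≡ i₀ [MOD i₀ + 1] := by
  obtain ⟨⟨hi₀1, hi₀0⟩, hmin⟩ := hi₀
  have hne : ∀ r < i₀, s r ≠ 0 := fun r hr h => by
    rcases Nat.eq_zero_or_pos r with rfl | hr0
    · exact one_ne_zero (hs.zero ▸ h)
    · exact absurd (hmin ⟨hr0, h⟩) (by omega)
  have hperiod : s (i₀ + 1) ≠ 0 := by
    obtain ⟨j, rfl⟩ : ∃ j, i₀ = j + 1 := ⟨i₀ - 1, by omega⟩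
    rw [hs.add_two, hi₀0]
    simpa using mul_ne_zero hc (hne j (by omega))
  have hmod : m % (i₀ + 1) < i₀ + 1 := Nat.mod_lt _ (by omega)
  have hfactor : s m = s (i₀ + 1) ^ (m / (i₀ + 1)) * s (m % (i₀ + 1)) := by
    rw [← hs.add_mul_of_eq_zero hi₀0, Nat.mod_add_div]
  rw [hfactor, mul_eq_zero, or_iff_right (pow_ne_zero _ hperiod), Nat.ModEq,
    Nat.mod_eq_of_lt (Nat.lt_succ_self i₀)]
  exact ⟨fun h => by_contra fun h' => hne _ (by omega) h, fun h => by rwa [h]⟩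

end IsHeckeRecurrence

theorem hasSum_ite_modEq_pow {x : ℝ} (hx : |x| < 1) {q t : ℕ} (ht : t < q) :
    HasSum (fun m => if m ≡ t [MOD q] then x ^ m else 0) (x ^ t * (1 - x ^ q)⁻¹) := by
  have hq : 0 < q := by omega
  have hinj : Function.Injective (fun k => t + q * k) := fun k l h =>
    Nat.eq_of_mul_eq_mul_left hq (Nat.add_left_cancel h)
  have hxq : |x ^ q| < 1 := by rw [abs_pow]; exact pow_lt_one₀ (abs_nonneg x) hx hq.ne'
  have hcomp : (fun m => if m ≡ t [MOD q] then x ^ m else 0) ∘ (fun k => t + q * k) =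
      fun k => x ^ t * (x ^ q) ^ k := by
    funext k
    simp [Nat.ModEq, pow_add, pow_mul]
  rw [← hinj.hasSum_iff, hcomp]
  · exact (hasSum_geometric_of_abs_lt_one hxq).mul_left (x ^ t)
  · refine fun m hm => if_neg fun hmt => hm ⟨m / q, ?_⟩
    rw [Nat.ModEq, Nat.mod_eq_of_lt ht] at hmt
    have := Nat.mod_add_div m q
    simp only
    omega

theorem hasSum_ite_modEq_div_pow {P : ℝ} (hP : 1 < |P|) {t w q : ℕ} (hq : t + w + 1 = q) :
    HasSum (fun m => (if m ≡ t [MOD q] then 0 else 1) / P ^ m)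
      (P * (∑ j ∈ range q, P ^ j - P ^ w) / (P ^ q - 1)) := by
  have hx : |P⁻¹| < 1 := by rw [abs_inv]; exact inv_lt_one_of_one_lt₀ hP
  have hPq : 1 < |P ^ q| := by rw [abs_pow]; exact one_lt_pow₀ hP (by omega)
  have hP0 : P ≠ 0 := fun h => by norm_num [h] at hP
  have hP1 : P - 1 ≠ 0 := sub_ne_zero.mpr fun h => by norm_num [h] at hP
  have hPq1 : P ^ q - 1 ≠ 0 := sub_ne_zero.mpr fun h => by norm_num [h] at hPq
  have hf : (fun m => (if m ≡ t [MOD q] then (0 : ℝ) else 1) / P ^ m) =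
      fun m => P⁻¹ ^ m - if m ≡ t [MOD q] then P⁻¹ ^ m else 0 := by
    funext m; split_ifs <;> simp [div_eq_mul_inv]
  have hsum : P * (∑ j ∈ range q, P ^ j - P ^ w) / (P ^ q - 1) =
      (1 - P⁻¹)⁻¹ - P⁻¹ ^ t * (1 - P⁻¹ ^ q)⁻¹ := by
    have e1 : (1 - P⁻¹)⁻¹ = P / (P - 1) := by field_simp
    have e2 : (1 - P⁻¹ ^ q)⁻¹ = P ^ q / (P ^ q - 1) := by
      rw [inv_pow, ← inv_div]; congr 1; field_simp
    have e3 : P ^ q * P⁻¹ ^ t = P * P ^ w := by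
      rw [← hq, inv_pow, pow_add, pow_add]; field_simp
    rw [e1, e2]
    field_simp
    linear_combination P * geom_sum_mul P q + (P - 1) * e3
  rw [hf, hsum]
  exact (hasSum_geometric_of_abs_lt_one hx).sub (hasSum_ite_modEq_pow hx (by omega : t < q))

theorem isLeast_add_one_div_le_natCast {n q : ℕ} (hq : 0 < q) :
    IsLeast {k : ℕ | ((n : ℝ) + 1) / q ≤ k} (n / q + 1) := by
  have hset : {k : ℕ | ((n : ℝ) + 1) / q ≤ k} = Set.Ioi (n / q) := by
    ext k
    rw [Set.mem_ofPred_eq, div_le_iff₀ (by exact_mod_cast hq), Set.mem_Ioi,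
      Nat.div_lt_iff_lt_mul hq, ← Nat.add_one_le_iff]
    exact_mod_cast Iff.rfl
  rw [hset]
  exact ⟨Nat.lt_succ_self _, fun k hk => hk⟩

theorem sum_range_add_one_sub_apply_zero {M : Type*} [AddCommGroup M] (f : ℕ → M) (n : ℕ) :
    ∑ j ∈ range (n + 1), f j - f 0 = ∑ j ∈ Icc 1 n, f j := by
  rw [range_eq_Ico, sum_eq_sum_Ico_succ_bot (show 0 < n + 1 by omega), zero_add,
    add_sub_cancel_left, Ico_add_one_right_eq_Icc]

/-- Let `i₀` be the least integer `i ≥ 1` with `s i = 0`, let `v ≥ 0` and let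
`k₀` be the least integer `≥ (v+1)/(i₀+1)`.  Then
`(Σ_{m=0}^∞ a⁰(p^{m+v}) p^{-m}) / (Σ_{m=0}^∞ a⁰(p^m) p^{-m})
  = (1 + p + ⋯ + p^{i₀} - p^{v-(k₀-1)(i₀+1)}) / (p + ⋯ + p^{i₀})`;
in particular both series converge and the denominator series is positive.
Here `a⁰(p^m)` is `1` if `s m ≠ 0` and `0` if `s m = 0`, where `s` is the
sequence `s 0 = 1`, `s 1 = a`, `s (m+2) = a * s (m+1) - p * s m`. -/
theorem stmt_5 (p : ℕ) (hp : p.Prime) (a : ℤ) (s : ℕ → ℤ)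
    (hs0 : s 0 = 1) (hs1 : s 1 = a)
    (hrec : ∀ m : ℕ, s (m + 2) = a * s (m + 1) - (p : ℤ) * s m)
    (i₀ : ℕ) (hi₀ : IsLeast {i : ℕ | 1 ≤ i ∧ s i = 0} i₀)
    (v : ℕ) (k₀ : ℕ)
    (hk₀ : IsLeast {k : ℕ | ((v : ℝ) + 1) / ((i₀ : ℝ) + 1) ≤ (k : ℝ)} k₀) :
    Summable (fun m : ℕ => (if s (m + v) = 0 then (0 : ℝ) else 1) / (p : ℝ) ^ m) ∧
    Summable (fun m : ℕ => (if s m = 0 then (0 : ℝ) else 1) / (p : ℝ) ^ m) ∧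
    0 < ∑' m : ℕ, (if s m = 0 then (0 : ℝ) else 1) / (p : ℝ) ^ m ∧
    (∑' m : ℕ, (if s (m + v) = 0 then (0 : ℝ) else 1) / (p : ℝ) ^ m) /
        (∑' m : ℕ, (if s m = 0 then (0 : ℝ) else 1) / (p : ℝ) ^ m) =
      ((∑ j ∈ Finset.range (i₀ + 1), (p : ℝ) ^ j) -
          (p : ℝ) ^ ((v : ℤ) - ((k₀ : ℤ) - 1) * ((i₀ : ℤ) + 1))) /
        (∑ j ∈ Finset.Icc 1 i₀, (p : ℝ) ^ j) := by
  have hs : IsHeckeRecurrence a (p : ℤ) s := ⟨hs0, hs1, hrec⟩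
  have hzero := hs.eq_zero_iff_modEq (by exact_mod_cast hp.ne_zero) hi₀
  have hi₀1 : 1 ≤ i₀ := hi₀.1.1
  set w := v % (i₀ + 1)
  set t := i₀ - w
  have htw : t + w = i₀ := Nat.sub_add_cancel (Nat.le_of_lt_succ (Nat.mod_lt _ i₀.succ_pos))
  have hshift (m : ℕ) : s (m + v) = 0 ↔ m ≡ t [MOD i₀ + 1] := by
    have hv : v ≡ w [MOD i₀ + 1] := (Nat.mod_modEq v _).symm
    rw [hzero]
    exact ⟨fun h => hv.add_right_cancel (by rwa [htw]), fun h => htw ▸ h.add hv⟩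
  have hk : k₀ = v / (i₀ + 1) + 1 :=
    hk₀.unique (by simpa using isLeast_add_one_div_le_natCast (n := v) i₀.succ_pos)
  have hexp : (v : ℤ) - ((k₀ : ℤ) - 1) * ((i₀ : ℤ) + 1) = w := by
    rw [hk]
    push_cast [w]
    linear_combination (-1 : ℤ) * Int.mul_ediv_add_emod (v : ℤ) (i₀ + 1)
  have hP : 1 < |(p : ℝ)| := by rw [Nat.abs_cast]; exact_mod_cast hp.one_lt
  have hP0 : (0 : ℝ) < p := by exact_mod_cast hp.pos
  have hPq : (0 : ℝ) < p ^ (i₀ + 1) - 1 :=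
    sub_pos.mpr (one_lt_pow₀ (by exact_mod_cast hp.one_lt) i₀.succ_ne_zero)
  have hN := hasSum_ite_modEq_div_pow hP (show t + w + 1 = i₀ + 1 by omega)
  have hD := hasSum_ite_modEq_div_pow (t := i₀) (w := 0) (q := i₀ + 1) hP rfl
  simp_rw [← hshift] at hN
  rw [sum_range_add_one_sub_apply_zero (fun j => (p : ℝ) ^ j)] at hD
  simp_rw [← hzero] at hD
  have hIcc : 0 < ∑ j ∈ Icc 1 i₀, (p : ℝ) ^ j :=
    sum_pos (fun j _ => by positivity) ⟨1, by simpa using hi₀1⟩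
  refine ⟨hN.summable, hD.summable, hD.tsum_eq ▸ div_pos (mul_pos hP0 hIcc) hPq, ?_⟩
  rw [hN.tsum_eq, hD.tsum_eq, hexp, zpow_natCast, div_div_div_cancel_right₀ hPq.ne',
    mul_div_mul_left _ _ hP0.ne']
end

section
/- There exists an absolute constant C > 0 such that for every real z ≥ 1, Σ_{z < m < 2z} |b(m)|/m ≤ C · z^{−3/4} · 2^{ω(d)}. -/
/-!
Rankin's trick: for `z < m` we have `1/m ≤ z^{-3/4} m^{-1/4}`, so the sum is at most `z^{-3/4}`
times the sum of `4^{ω(m)} m^{-1/4}` over all `m` whose prime factors divide `d`. That sum is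
the Euler product `∏_{p ∣ d} (1 + 4 p^{-1/4} / (1 - p^{-1/4}))`; its factors are at most `2`
once `p ≥ 625 = 5^4`, and at most `24` for the remaining (fewer than 625) primes.
-/

open Finset Nat

noncomputable def rankinWeight (k σ : ℝ) (m : ℕ) : ℝ := k ^ #m.primeFactors * (m : ℝ) ^ (-σ)

noncomputable def eulerFactor (k σ : ℝ) (p : ℕ) : ℝ :=
  1 + k * (p : ℝ) ^ (-σ) / (1 - (p : ℝ) ^ (-σ))

lemma Nat.Prime.cast_rpow_neg_lt_one {p : ℕ} (hp : p.Prime) {σ : ℝ} (hσ : 0 < σ) :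
    (p : ℝ) ^ (-σ) < 1 :=
  Real.rpow_lt_one_of_one_lt_of_neg (by exact_mod_cast hp.one_lt) (neg_neg_of_pos hσ)

section RankinWeight

variable {k σ : ℝ}

lemma rankinWeight_nonneg (hk : 0 ≤ k) (m : ℕ) : 0 ≤ rankinWeight k σ m := by
  unfold rankinWeight; positivity

lemma rankinWeight_one : rankinWeight k σ 1 = 1 := by simp [rankinWeight]

lemma rankinWeight_mul {m n : ℕ} (h : m.Coprime n) :
    rankinWeight k σ (m * n) = rankinWeight k σ m * rankinWeight k σ n := by
  rw [rankinWeight, h.primeFactors_mul, card_union_of_disjoint h.disjoint_primeFactors, pow_add,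
    Nat.cast_mul, Real.mul_rpow (by positivity) (by positivity), rankinWeight, rankinWeight]
  ring

lemma rankinWeight_prime_pow {p n : ℕ} (hp : p.Prime) (hn : n ≠ 0) :
    rankinWeight k σ (p ^ n) = k * ((p : ℝ) ^ (-σ)) ^ n := by
  rw [rankinWeight, primeFactors_prime_pow hn hp, card_singleton, pow_one, Nat.cast_pow,
    ← Real.rpow_natCast, ← Real.rpow_mul (by positivity), mul_comm (n : ℝ),
    Real.rpow_mul_natCast (by positivity), mul_comm]

lemma hasSum_rankinWeight_prime_pow {p : ℕ} (hp : p.Prime) (hσ : 0 < σ) :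
    HasSum (fun n => rankinWeight k σ (p ^ n)) (eulerFactor k σ p) := by
  set x := (p : ℝ) ^ (-σ)
  have hshift : (fun n => rankinWeight k σ (p ^ (n + 1))) = fun n => k * x * x ^ n := by
    ext n
    rw [rankinWeight_prime_pow hp (Nat.add_one_ne_zero n), _root_.pow_succ']
    ring
  have hgeom :=
    (hasSum_geometric_of_lt_one (by positivity) (hp.cast_rpow_neg_lt_one hσ)).mul_left (k * x)
  rw [← hshift] at hgeom
  have hval : k * x * (1 - x)⁻¹ + ∑ i ∈ range 1, rankinWeight k σ (p ^ i) = eulerFactor k σ p := by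
    rw [sum_range_one, pow_zero, rankinWeight_one, eulerFactor]
    ring
  exact hval ▸ (hasSum_nat_add_iff (f := fun n => rankinWeight k σ (p ^ n)) 1).mp hgeom

lemma hasSum_rankinWeight_factoredNumbers (hk : 0 ≤ k) (hσ : 0 < σ) (s : Finset ℕ) :
    HasSum (fun m : factoredNumbers s => rankinWeight k σ m)
      (∏ p ∈ s with p.Prime, eulerFactor k σ p) := by
  have euler := EulerProduct.summable_and_hasSum_factoredNumbers_prod_filter_prime_tsum
    (f := rankinWeight k σ) rankinWeight_one rankinWeight_mul (fun hp => ?_) s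
  · rw [prod_congr rfl fun p hp => (hasSum_rankinWeight_prime_pow (mem_filter.1 hp).2 hσ).tsum_eq]
      at euler
    exact euler.2
  · simp_rw [Real.norm_of_nonneg (rankinWeight_nonneg hk _)]
    exact (hasSum_rankinWeight_prime_pow hp hσ).summable

lemma sum_rankinWeight_le_prod_eulerFactor (hk : 0 ≤ k) (hσ : 0 < σ) {s T : Finset ℕ}
    (hT : ↑T ⊆ factoredNumbers s) :
    ∑ m ∈ T, rankinWeight k σ m ≤ ∏ p ∈ s with p.Prime, eulerFactor k σ p := by
  have h := (hasSum_subtype_iff_indicator (f := rankinWeight k σ) (s := factoredNumbers s)).mp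
    (hasSum_rankinWeight_factoredNumbers hk hσ s)
  calc ∑ m ∈ T, rankinWeight k σ m
      = ∑ m ∈ T, (factoredNumbers s).indicator (rankinWeight k σ) m :=
        sum_congr rfl fun m hm => (Set.indicator_of_mem (hT hm) _).symm
    _ ≤ _ := by
      refine sum_le_hasSum T (fun m _ => ?_) h
      exact Set.indicator_nonneg (fun m _ => rankinWeight_nonneg hk m) m

end RankinWeight

section EulerFactor

variable {k σ : ℝ} {p : ℕ}

lemma one_le_eulerFactor (hk : 0 ≤ k) (hp : p.Prime) (hσ : 0 < σ) : 1 ≤ eulerFactor k σ p :=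
  le_add_of_nonneg_right <|
    div_nonneg (by positivity) (sub_nonneg.2 (hp.cast_rpow_neg_lt_one hσ).le)

lemma eulerFactor_le {t : ℝ} (hk : 0 ≤ k) (hpt : (p : ℝ) ^ (-σ) ≤ t) (ht : t < 1) :
    eulerFactor k σ p ≤ 1 + k * t / (1 - t) := by
  have ht0 : 0 ≤ t := (Real.rpow_nonneg p.cast_nonneg _).trans hpt
  unfold eulerFactor
  gcongr

end EulerFactor

lemma rpow_neg_one_div_four_le {x t : ℝ} (hx : 0 < x) (ht : 0 ≤ t) (h : x⁻¹ ≤ t ^ 4) :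
    x ^ (-(1 / 4 : ℝ)) ≤ t := by
  refine le_of_pow_le_pow_left₀ (n := 4) (by norm_num) ht ?_
  rwa [← Real.rpow_natCast, ← Real.rpow_mul hx.le, show -(1 / 4 : ℝ) * (4 : ℕ) = -1 by norm_num,
    Real.rpow_neg_one]

lemma eulerFactor_four_quarter_le_24 {p : ℕ} (hp : p.Prime) : eulerFactor 4 (1 / 4) p ≤ 24 := by
  have hp2 : (2 : ℝ) ≤ p := by exact_mod_cast hp.two_le
  refine (eulerFactor_le (t := 17 / 20) (by norm_num) ?_ (by norm_num)).trans (by norm_num)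
  exact rpow_neg_one_div_four_le (by positivity) (by norm_num)
    ((inv_anti₀ (by norm_num) hp2).trans (by norm_num))

lemma eulerFactor_four_quarter_le_two {p : ℕ} (hp : 625 ≤ p) : eulerFactor 4 (1 / 4) p ≤ 2 := by
  have hp625 : (625 : ℝ) ≤ p := by exact_mod_cast hp
  refine (eulerFactor_le (t := 1 / 5) (by norm_num) ?_ (by norm_num)).trans (by norm_num)
  exact rpow_neg_one_div_four_le (by positivity) (by norm_num)
    ((inv_anti₀ (by norm_num) hp625).trans (by norm_num))

lemma prod_eulerFactor_le (s : Finset ℕ) :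
    ∏ p ∈ s with p.Prime, eulerFactor 4 (1 / 4) p ≤ 24 ^ 625 * 2 ^ #s := by
  have hpos : ∀ p ∈ {p ∈ s | p.Prime}, 0 ≤ eulerFactor 4 (1 / 4) p := fun p hp =>
    zero_le_one.trans (one_le_eulerFactor (by norm_num) (mem_filter.1 hp).2 (by norm_num))
  rw [← prod_filter_mul_prod_filter_not _ (· < 625)]
  calc _ ≤ (∏ _p ∈ {p ∈ s | p.Prime}.filter (· < 625), (24 : ℝ)) *
        ∏ _p ∈ {p ∈ s | p.Prime}.filter (¬· < 625), (2 : ℝ) := by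
        refine mul_le_mul (prod_le_prod (fun p hp => hpos p (mem_filter.1 hp).1) fun p hp =>
            eulerFactor_four_quarter_le_24 (mem_filter.1 (mem_filter.1 hp).1).2)
          (prod_le_prod (fun p hp => hpos p (mem_filter.1 hp).1) fun p hp =>
            eulerFactor_four_quarter_le_two (not_lt.1 (mem_filter.1 hp).2))
          (prod_nonneg fun p hp => hpos p (mem_filter.1 hp).1) (by positivity)
    _ ≤ 24 ^ 625 * 2 ^ #s := by
        rw [prod_const, prod_const]
        gcongr
        · norm_num
        · exact (card_le_card fun p hp => mem_range.2 (mem_filter.1 hp).2).trans_eq (card_range _)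
        · exact one_le_two
        · exact (filter_subset _ _).trans (filter_subset _ _)

lemma inv_le_rpow_mul_rpow_neg {z m σ : ℝ} (hz : 0 < z) (hzm : z ≤ m) (hσ : σ ≤ 1) :
    m⁻¹ ≤ z ^ (σ - 1) * m ^ (-σ) := by
  have hm : 0 < m := hz.trans_le hzm
  calc m⁻¹ = m ^ (σ - 1) * m ^ (-σ) := by
        rw [← Real.rpow_add hm, show σ - 1 + -σ = -1 by ring, Real.rpow_neg_one]
    _ ≤ z ^ (σ - 1) * m ^ (-σ) := by
        gcongr ?_ * _
        exact Real.rpow_le_rpow_of_nonpos hz hzm (by linarith)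

lemma div_le_rpow_mul_rankinWeight {k σ z a : ℝ} {m : ℕ} (hk : 0 ≤ k)
    (ha : a ≤ k ^ #m.primeFactors) (hz : 0 < z) (hzm : z ≤ m) (hσ : σ ≤ 1) :
    a / m ≤ z ^ (σ - 1) * rankinWeight k σ m :=
  calc a / m = a * (m : ℝ)⁻¹ := div_eq_mul_inv _ _
    _ ≤ k ^ #m.primeFactors * (z ^ (σ - 1) * (m : ℝ) ^ (-σ)) :=
      mul_le_mul ha (inv_le_rpow_mul_rpow_neg hz hzm hσ) (inv_nonneg.2 (hz.le.trans hzm))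
        (by positivity)
    _ = z ^ (σ - 1) * rankinWeight k σ m := by rw [rankinWeight]; ring

lemma eq_zero_of_notMem_factoredNumbers {d m : ℕ} {b : ℕ → ℝ} (hd : d ≠ 0)
    (hb : ∀ n : ℕ, 1 ≤ n → (∃ q : ℕ, q.Prime ∧ q ∣ n ∧ ¬ q ∣ d) → b n = 0) (hm : 1 ≤ m)
    (hmd : m ∉ factoredNumbers d.primeFactors) : b m = 0 := by
  obtain ⟨q, hq, hqm, hqd⟩ : ∃ q, q.Prime ∧ q ∣ m ∧ q ∉ d.primeFactors := by
    simpa [mem_factoredNumbers'] using hmd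
  exact hb m hm ⟨q, hq, hqm, fun h => hqd (mem_primeFactors.2 ⟨hq, h, hd⟩)⟩

open scoped Classical in
/-- There is an absolute constant `C > 0` such that, whenever `d ≥ 1` and `b`
vanishes at integers having a prime factor not dividing `d` and satisfies
`|b n| ≤ 4^{ω(n)}`, one has for every real `z ≥ 1`:
`Σ_{z < m < 2z} |b m|/m ≤ C * z^{-3/4} * 2^{ω(d)}`. -/
theorem stmt_8 :
    ∃ C : ℝ, 0 < C ∧
      ∀ (d : ℕ), 0 < d → ∀ (b : ℕ → ℝ),
        (∀ n : ℕ, 1 ≤ n → (∃ q : ℕ, q.Prime ∧ q ∣ n ∧ ¬ q ∣ d) → b n = 0) →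
        (∀ n : ℕ, 1 ≤ n → |b n| ≤ 4 ^ n.primeFactors.card) →
        ∀ z : ℝ, 1 ≤ z →
          ∑ m ∈ (Finset.range (⌈2 * z⌉₊ + 1)).filter
              (fun m : ℕ => z < (m : ℝ) ∧ (m : ℝ) < 2 * z),
              |b m| / (Nat.cast m : ℝ) ≤
            C * z ^ (-(3 : ℝ) / 4) * 2 ^ d.primeFactors.card := by
  refine ⟨24 ^ 625, by positivity, fun d hd b hb_supp hb_le z hz => ?_⟩
  set S := (Finset.range (⌈2 * z⌉₊ + 1)).filter (fun m : ℕ => z < (m : ℝ) ∧ (m : ℝ) < 2 * z)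
  set F := factoredNumbers d.primeFactors
  have hzS : ∀ m ∈ S, z < m := fun m hm => (mem_filter.1 hm).2.1
  have hS1 : ∀ m ∈ S, 1 ≤ m := fun m hm => Nat.one_le_cast.1 (hz.trans (hzS m hm).le)
  calc ∑ m ∈ S, |b m| / m
      = ∑ m ∈ S with m ∈ F, |b m| / m := by
        refine (sum_filter_of_ne fun m hm hne => not_not.1 fun hmF => hne ?_).symm
        rw [eq_zero_of_notMem_factoredNumbers hd.ne' hb_supp (hS1 m hm) hmF, abs_zero, zero_div]
    _ ≤ ∑ m ∈ S with m ∈ F, z ^ (-(3 : ℝ) / 4) * rankinWeight 4 (1 / 4) m := by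
        refine sum_le_sum fun m hm => ?_
        replace hm := (mem_filter.1 hm).1
        rw [show -(3 : ℝ) / 4 = 1 / 4 - 1 by norm_num]
        exact div_le_rpow_mul_rankinWeight (by norm_num) (hb_le m (hS1 m hm))
          (zero_lt_one.trans_le hz) (hzS m hm).le (by norm_num)
    _ = z ^ (-(3 : ℝ) / 4) * ∑ m ∈ S with m ∈ F, rankinWeight 4 (1 / 4) m := (mul_sum ..).symm
    _ ≤ z ^ (-(3 : ℝ) / 4) * (24 ^ 625 * 2 ^ #d.primeFactors) := by
        gcongr
        exact (sum_rankinWeight_le_prod_eulerFactor (by norm_num) (by norm_num)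
          fun m hm => (mem_filter.1 hm).2).trans (prod_eulerFactor_le _)
    _ = 24 ^ 625 * z ^ (-(3 : ℝ) / 4) * 2 ^ #d.primeFactors := by rw [mul_left_comm, mul_assoc]
end

section
/- Let κ ∈ [0,1], δ > 0, K > 0, and let A be a set of prime numbers such that | #{ p ∈ A : p ≤ t } − κ·t/log t | ≤ K·t/(log t)^{1+δ} for all real t ≥ 2. Then the limit lim_{s → 1⁺} ( Σ_{p ∈ A} p^{−s} − κ·log(1/(s−1)) ) exists and is finite (the series Σ_{p ∈ A} p^{−s} converging for every real s > 1). -/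
open MeasureTheory Filter Set Real Topology

/-!
Partial summation writes `∑_{p ∈ A} p^{-s} = s ∫_2^∞ π_A(t) t^{-s-1} dt`, where `π_A` is the
counting function. Split `π_A(t) = κ t / log t + E(t)`. Since `|E(t)| t^{-s-1}` is dominated by
`K / (t (log t)^{1+δ})`, which is integrable, `∫ E(t) t^{-s-1} dt` is continuous at `s = 1`. The
substitution `t = exp (v / (s - 1))` turns the main term `κ s ∫_2^∞ t^{-s} / log t dt` into
`κ s E₁((s - 1) log 2)`, where `E₁(a) = ∫_a^∞ e^{-v} / v dv = -log a + O(1)` as `a → 0⁺`; this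
yields exactly the singularity `κ log (1 / (s - 1))`.
-/

lemma abs_exp_neg_sub_one_div_le_one {v : ℝ} (hv : 0 ≤ v) : |(exp (-v) - 1) / v| ≤ 1 := by
  rcases hv.eq_or_lt with rfl | hv
  · simp
  have h1 : exp (-v) ≤ 1 := exp_le_one_iff.mpr (by linarith)
  have h2 : 1 - v ≤ exp (-v) := by linarith [add_one_le_exp (-v)]
  rw [abs_div, abs_of_pos hv, div_le_one hv, abs_of_nonpos (by linarith)]
  linarith

lemma integrableOn_exp_neg_sub_one_div_Icc (b : ℝ) :
    IntegrableOn (fun v : ℝ => (exp (-v) - 1) / v) (Icc 0 b) := by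
  refine Measure.integrableOn_of_bounded (M := 1) measure_Icc_lt_top.ne
    (by fun_prop : Measurable fun v : ℝ => (exp (-v) - 1) / v).aestronglyMeasurable ?_
  filter_upwards [ae_restrict_mem measurableSet_Icc] with v hv
  exact abs_exp_neg_sub_one_div_le_one hv.1

lemma integrableOn_exp_neg_mul_div_Ioi {b c : ℝ} (hb : 0 < b) (hc : 0 < c) :
    IntegrableOn (fun u : ℝ => exp (-b * u) / u) (Ioi c) := by
  refine ((exp_neg_integrableOn_Ioi c hb).div_const c).mono'
    (by fun_prop : Measurable fun u : ℝ => exp (-b * u) / u).aestronglyMeasurable ?_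
  filter_upwards [ae_restrict_mem measurableSet_Ioi] with u hu
  have hu0 : 0 < u := hc.trans hu
  rw [norm_div, norm_of_nonneg (exp_pos _).le, norm_of_nonneg hu0.le]
  exact div_le_div_of_nonneg_left (exp_pos _).le hc (le_of_lt hu)

lemma integral_exp_neg_div_add_log_eq {a : ℝ} (ha : 0 < a) (ha1 : a ≤ 1) :
    (∫ v in Ioi a, exp (-v) / v) + log a
      = (∫ v in a..1, (exp (-v) - 1) / v) + ∫ v in Ioi 1, exp (-v) / v := by
  have hne : ∀ v ∈ uIcc a 1, v ≠ 0 := fun v hv =>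
    (ha.trans_le (by simpa [ha1] using hv.1)).ne'
  have hexp : IntervalIntegrable (fun v : ℝ => exp (-v) / v) volume a 1 :=
    (ContinuousOn.div (by fun_prop) continuousOn_id hne).intervalIntegrable
  have hsub : IntervalIntegrable (fun v : ℝ => (exp (-v) - 1) / v) volume a 1 :=
    (ContinuousOn.div (by fun_prop) continuousOn_id hne).intervalIntegrable
  have hinv : IntervalIntegrable (fun v : ℝ => v⁻¹) volume a 1 :=
    intervalIntegral.intervalIntegrable_inv hne continuousOn_id
  have hsplit : (∫ v in a..1, exp (-v) / v)
      = (∫ v in a..1, (exp (-v) - 1) / v) + ∫ v in a..1, v⁻¹ := by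
    rw [← intervalIntegral.integral_add hsub hinv]
    refine intervalIntegral.integral_congr fun v hv => ?_
    field_simp [hne v hv]
    ring
  rw [← intervalIntegral.integral_interval_add_Ioi' hexp
    (by simpa using integrableOn_exp_neg_mul_div_Ioi one_pos one_pos), hsplit,
    integral_inv_of_pos ha one_pos, one_div, log_inv]
  ring

-- The limit is `-γ` (Euler's constant).
lemma exists_tendsto_integral_exp_neg_div_add_log :
    ∃ L, Tendsto (fun a => (∫ v in Ioi a, exp (-v) / v) + log a) (𝓝[>] 0) (𝓝 L) := by
  refine ⟨(∫ v in (0:ℝ)..1, (exp (-v) - 1) / v) + ∫ v in Ioi 1, exp (-v) / v, ?_⟩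
  have hprim : ContinuousWithinAt (fun a => ∫ v in a..1, (exp (-v) - 1) / v) (Ioi 0) 0 := by
    have hint : IntegrableOn (fun v : ℝ => (exp (-v) - 1) / v) (uIcc 0 1) := by
      simpa using integrableOn_exp_neg_sub_one_div_Icc 1
    refine (intervalIntegral.continuousOn_primitive_interval_left hint 0 (by simp))
      |>.mono_of_mem_nhdsWithin ?_
    simpa using Icc_mem_nhdsGT (show (0:ℝ) < 1 by norm_num)
  refine (hprim.tendsto.add_const _).congr' ?_
  filter_upwards [Ioc_mem_nhdsGT (show (0:ℝ) < 1 by norm_num)] with a ha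
  exact (integral_exp_neg_div_add_log_eq ha.1 ha.2).symm

lemma rpow_neg_div_log_eq_inv_mul {s t : ℝ} (ht : 0 < t) :
    t ^ (-s) / log t = t⁻¹ * (exp (-(s - 1) * log t) / log t) := by
  rw [mul_comm _ (log t), ← rpow_def_of_pos ht, ← rpow_neg_one, mul_div_assoc', ← rpow_add ht]
  ring_nf

lemma integrableOn_rpow_neg_div_log {a s : ℝ} (ha : 1 < a) (hs : 1 < s) :
    IntegrableOn (fun t : ℝ => t ^ (-s) / log t) (Ici a) := by
  have ha0 : 0 < a := one_pos.trans ha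
  rw [integrableOn_Ici_iff_integrableOn_Ioi]
  refine (integrableOn_congr_fun (fun t ht => rpow_neg_div_log_eq_inv_mul (ha0.trans ht))
    measurableSet_Ioi).mpr ?_
  exact (integrableOn_comp_log_Ioi (fun u => exp (-(s - 1) * u) / u) ha0).mpr
    (integrableOn_exp_neg_mul_div_Ioi (by linarith) (log_pos ha))

lemma integral_rpow_neg_div_log {a s : ℝ} (ha : 1 < a) (hs : 1 < s) :
    ∫ t in Ici a, t ^ (-s) / log t = ∫ v in Ioi ((s - 1) * log a), exp (-v) / v := by
  have ha0 : 0 < a := one_pos.trans ha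
  have hs1 : 0 < s - 1 := by linarith
  have hlog := integral_comp_log_Ioi (fun u => exp (-(s - 1) * u) / u) ha0
  simp only [smul_eq_mul] at hlog
  rw [integral_Ici_eq_integral_Ioi, setIntegral_congr_fun measurableSet_Ioi
    (fun t ht => rpow_neg_div_log_eq_inv_mul (ha0.trans ht)), hlog,
    ← integral_comp_mul_left_Ioi' _ _ hs1, smul_eq_mul, ← integral_const_mul]
  refine setIntegral_congr_fun measurableSet_Ioi fun u hu => ?_
  have hu0 : u ≠ 0 := (log_pos ha).trans hu |>.ne'
  field_simp

lemma exists_tendsto_integral_rpow_neg_div_log_add_log {a : ℝ} (ha : 1 < a) :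
    ∃ L, Tendsto (fun s => (∫ t in Ici a, t ^ (-s) / log t) + log (s - 1)) (𝓝[>] 1) (𝓝 L) := by
  obtain ⟨L, hL⟩ := exists_tendsto_integral_exp_neg_div_add_log
  have hloga : 0 < log a := log_pos ha
  have hscale : Tendsto (fun s => (s - 1) * log a) (𝓝[>] 1) (𝓝[>] 0) := by
    have hcont : Continuous fun s : ℝ => (s - 1) * log a := by fun_prop
    simpa using hcont.continuousWithinAt (s := Ioi 1) (x := 1) |>.tendsto_nhdsWithin
      (t := Ioi 0) fun s (hs : 1 < s) => mul_pos (sub_pos.mpr hs) hloga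
  refine ⟨L - log (log a), (hL.comp hscale |>.sub_const _).congr' ?_⟩
  filter_upwards [self_mem_nhdsWithin] with s (hs : 1 < s)
  simp only [Function.comp_apply]
  rw [integral_rpow_neg_div_log ha hs, log_mul (sub_pos.mpr hs).ne' hloga.ne']
  ring

noncomputable def countingFunction (A : Set ℕ) (t : ℝ) : ℝ :=
  ({p : ℕ | p ∈ A ∧ (p : ℝ) ≤ t}.ncard : ℝ)

lemma finite_setOf_mem_and_cast_le (A : Set ℕ) (t : ℝ) :
    {p : ℕ | p ∈ A ∧ (p : ℝ) ≤ t}.Finite :=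
  (finite_Iic ⌊t⌋₊).subset fun _ hp => Nat.le_floor hp.2

lemma monotone_countingFunction (A : Set ℕ) : Monotone (countingFunction A) := fun _ _ hst =>
  Nat.cast_le.mpr <| ncard_le_ncard (fun _ hp => ⟨hp.1, hp.2.trans hst⟩)
    (finite_setOf_mem_and_cast_le A _)

lemma measurable_countingFunction_sub (A : Set ℕ) (κ : ℝ) :
    Measurable fun t => countingFunction A t - κ * t / log t :=
  (monotone_countingFunction A).measurable.sub
    ((measurable_const.mul measurable_id).div measurable_log)

lemma tsum_indicator_Ici_eq_countingFunction_mul (A : Set ℕ) (g : ℝ → ℝ) (t : ℝ) :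
    ∑' p : A, (Ici ((p : ℕ) : ℝ)).indicator g t = countingFunction A t * g t := by
  set S := {p : ℕ | p ∈ A ∧ (p : ℝ) ≤ t}
  have hind :
      A.indicator (fun n : ℕ => (Ici (n : ℝ)).indicator g t) = S.indicator fun _ => g t := by
    ext n
    by_cases hn : n ∈ A <;> by_cases hnt : (n : ℝ) ≤ t <;> simp [S, indicator, hn, hnt]
  rw [tsum_subtype A (fun n : ℕ => (Ici (n : ℝ)).indicator g t), hind, ← tsum_subtype S,
    tsum_const, Nat.card_coe_set_eq, nsmul_eq_mul, countingFunction]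

lemma tsum_rpow_neg_eq_mul_integral_countingFunction {A : Set ℕ} {a s : ℝ} (ha : 0 < a)
    (hA : ∀ p ∈ A, a ≤ p) (hs : 1 < s) :
    ∑' p : A, ((p : ℕ) : ℝ) ^ (-s) = s * ∫ t in Ici a, countingFunction A t * t ^ (-s - 1) := by
  have hs1 : -s - 1 < -1 := by linarith
  set F : A → ℝ → ℝ := fun p => (Ici ((p : ℕ) : ℝ)).indicator fun t => t ^ (-s - 1)
  have hF : ∀ p : A, ∫ t in Ici a, F p t = ((p : ℕ) : ℝ) ^ (-s) / s := fun p => by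
    have hp := hA p p.2
    rw [integral_indicator measurableSet_Ici, Measure.restrict_restrict measurableSet_Ici,
      Ici_inter_Ici, sup_eq_left.mpr hp, integral_Ici_eq_integral_Ioi,
      integral_Ioi_rpow_of_lt hs1 (ha.trans_le hp)]
    ring_nf
  have hF_int : ∀ p : A, Integrable (F p) (volume.restrict (Ici a)) := fun p => by
    have : IntegrableOn (fun t : ℝ => t ^ (-s - 1)) (Ici a) :=
      (integrableOn_Ici_iff_integrableOn_Ioi).mpr (integrableOn_Ioi_rpow_of_lt hs1 ha)
    exact this.integrable.indicator measurableSet_Ici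
  have hF_norm : ∀ p : A, ∫ t in Ici a, ‖F p t‖ = ((p : ℕ) : ℝ) ^ (-s) / s := fun p => by
    rw [← hF]
    refine integral_congr_ae (Eventually.of_forall fun t => norm_of_nonneg ?_)
    exact indicator_nonneg (fun t ht => rpow_nonneg ((Nat.cast_nonneg _).trans ht) _) t
  have hsum : Summable fun p : A => ((p : ℕ) : ℝ) ^ (-s) / s :=
    ((summable_nat_rpow.mpr (by linarith)).subtype A).div_const s
  rw [← setIntegral_congr_fun measurableSet_Ici (fun t _ =>
      tsum_indicator_Ici_eq_countingFunction_mul A (fun t => t ^ (-s - 1)) t),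
    ← integral_tsum_of_summable_integral_norm hF_int (by simpa only [hF_norm] using hsum),
    ← tsum_mul_left]
  simp only [hF]
  field_simp

lemma integrableOn_inv_mul_log_rpow_neg {a δ : ℝ} (ha : 1 < a) (hδ : 0 < δ) :
    IntegrableOn (fun t : ℝ => t⁻¹ * log t ^ (-(1 + δ))) (Ici a) := by
  rw [integrableOn_Ici_iff_integrableOn_Ioi]
  simpa using (integrableOn_comp_log_Ioi (fun u => u ^ (-(1 + δ))) (one_pos.trans ha)).mpr
    (integrableOn_Ioi_rpow_of_lt (by linarith) (log_pos ha))

section ErrorTerm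

variable {E : ℝ → ℝ} {a δ K : ℝ}

lemma abs_mul_rpow_neg_le (ha : 1 < a) (hbound : ∀ t, a ≤ t → |E t| ≤ K * t / log t ^ (1 + δ))
    {s t : ℝ} (hs : 1 ≤ s) (ht : a ≤ t) :
    |E t * t ^ (-s - 1)| ≤ K * (t⁻¹ * log t ^ (-(1 + δ))) := by
  have ht1 : 1 < t := ha.trans_le ht
  have ht0 : 0 < t := one_pos.trans ht1
  have hbound_nonneg : 0 ≤ K * t / log t ^ (1 + δ) := (abs_nonneg _).trans (hbound t ht)
  calc |E t * t ^ (-s - 1)| = |E t| * t ^ (-s - 1) := by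
        rw [abs_mul, abs_of_pos (rpow_pos_of_pos ht0 _)]
    _ ≤ K * t / log t ^ (1 + δ) * t ^ (-2 : ℝ) := by
        gcongr
        · exact hbound t ht
        · exact ht1.le
        · linarith
    _ = K * (t⁻¹ * log t ^ (-(1 + δ))) := by
        rw [rpow_neg (log_pos ht1).le, rpow_neg ht0.le, rpow_two]
        field_simp

lemma integrableOn_mul_rpow_neg (ha : 1 < a) (hδ : 0 < δ) (hE : Measurable E)
    (hbound : ∀ t, a ≤ t → |E t| ≤ K * t / log t ^ (1 + δ)) {s : ℝ} (hs : 1 ≤ s) :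
    IntegrableOn (fun t => E t * t ^ (-s - 1)) (Ici a) := by
  refine ((integrableOn_inv_mul_log_rpow_neg ha hδ).const_mul K).mono'
    (hE.mul (measurable_id.pow_const _)).aestronglyMeasurable ?_
  filter_upwards [ae_restrict_mem measurableSet_Ici] with t ht
  exact abs_mul_rpow_neg_le ha hbound hs ht

lemma continuousWithinAt_integral_mul_rpow_neg (ha : 1 < a) (hδ : 0 < δ) (hE : Measurable E)
    (hbound : ∀ t, a ≤ t → |E t| ≤ K * t / log t ^ (1 + δ)) :
    ContinuousWithinAt (fun s : ℝ => ∫ t in Ici a, E t * t ^ (-s - 1)) (Ici 1) 1 := by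
  refine continuousWithinAt_of_dominated
    (bound := fun t => K * (t⁻¹ * log t ^ (-(1 + δ))))
    (Eventually.of_forall fun s => (hE.mul (measurable_id.pow_const _)).aestronglyMeasurable) ?_
    ((integrableOn_inv_mul_log_rpow_neg ha hδ).const_mul K) ?_
  · filter_upwards [self_mem_nhdsWithin] with s (hs : 1 ≤ s)
    filter_upwards [ae_restrict_mem measurableSet_Ici] with t ht
    exact abs_mul_rpow_neg_le ha hbound hs ht
  · filter_upwards [ae_restrict_mem measurableSet_Ici] with t ht
    have ht0 : t ≠ 0 := (one_pos.trans_le (ha.le.trans ht)).ne'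
    exact (continuous_const.mul (continuous_const.rpow (by fun_prop) fun _ => Or.inl ht0))
      |>.continuousWithinAt

end ErrorTerm

lemma tsum_rpow_neg_eq_of_abs_countingFunction_sub_le {A : Set ℕ} {κ δ K a s : ℝ} (ha : 1 < a)
    (hδ : 0 < δ) (hA : ∀ p ∈ A, a ≤ p)
    (hcount : ∀ t, a ≤ t → |countingFunction A t - κ * t / log t| ≤ K * t / log t ^ (1 + δ))
    (hs : 1 < s) :
    ∑' p : A, ((p : ℕ) : ℝ) ^ (-s) = s * (κ * (∫ t in Ici a, t ^ (-s) / log t)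
      + ∫ t in Ici a, (countingFunction A t - κ * t / log t) * t ^ (-s - 1)) := by
  have ha0 : 0 < a := one_pos.trans ha
  rw [tsum_rpow_neg_eq_mul_integral_countingFunction ha0 hA hs]
  congr 1
  rw [← integral_const_mul, ← integral_add ((integrableOn_rpow_neg_div_log ha hs).const_mul κ)
      (integrableOn_mul_rpow_neg ha hδ (measurable_countingFunction_sub A κ) hcount hs.le)]
  refine setIntegral_congr_fun measurableSet_Ici fun t (ht : a ≤ t) => ?_
  have ht0 : 0 < t := ha0.trans_le ht
  have hpow : t * t ^ (-s - 1) = t ^ (-s) := by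
    rw [← rpow_one_add' ht0.le (by linarith)]
    ring_nf
  rw [← hpow]
  ring

theorem stmt_12_general (κ δ K : ℝ) (hδ : 0 < δ)
    (A : Set ℕ) (hA : ∀ p ∈ A, Nat.Prime p)
    (hcount : ∀ t : ℝ, 2 ≤ t →
      |(Set.ncard {p : ℕ | p ∈ A ∧ (p : ℝ) ≤ t} : ℝ) - κ * t / Real.log t| ≤
        K * t / Real.log t ^ (1 + δ)) :
    (∀ s : ℝ, 1 < s → Summable (fun p : A => ((p : ℕ) : ℝ) ^ (-s))) ∧
    ∃ ℓ : ℝ, Filter.Tendsto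
      (fun s : ℝ => (∑' p : A, ((p : ℕ) : ℝ) ^ (-s)) - κ * Real.log (1 / (s - 1)))
      (nhdsWithin 1 (Set.Ioi 1)) (nhds ℓ) := by
  refine ⟨fun s hs => (summable_nat_rpow.mpr (by linarith)).subtype A, ?_⟩
  have hA2 : ∀ p ∈ A, (2 : ℝ) ≤ p := fun p hp => by exact_mod_cast (hA p hp).two_le
  obtain ⟨L, hL⟩ := exists_tendsto_integral_rpow_neg_div_log_add_log one_lt_two
  have hG := (continuousWithinAt_integral_mul_rpow_neg one_lt_two hδ
    (measurable_countingFunction_sub A κ) hcount).mono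
    Ioi_subset_Ici_self
  have hxlogx : Tendsto (fun s : ℝ => (s - 1) * log (s - 1)) (𝓝[>] 1) (𝓝 0) := by
    have hcont : Continuous fun s : ℝ => (s - 1) * log (s - 1) :=
      continuous_mul_log.comp (continuous_sub_right 1)
    simpa using (hcont.tendsto 1).mono_left nhdsWithin_le_nhds
  -- The expression equals `s (κ (I s + log (s-1)) + G s) - κ (s-1) log (s-1)`, where `I`, `G`
  -- are the integrals in `hL`, `hG`.
  refine ⟨_, ((tendsto_nhdsWithin_of_tendsto_nhds tendsto_id).mul
    ((hL.const_mul κ).add hG.tendsto)).sub (hxlogx.const_mul κ) |>.congr' ?_⟩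
  filter_upwards [self_mem_nhdsWithin] with s (hs : 1 < s)
  rw [tsum_rpow_neg_eq_of_abs_countingFunction_sub_le one_lt_two hδ hA2 hcount hs, one_div,
    log_inv]
  simp only [id]
  ring

/-- Let `κ ∈ [0,1]`, `δ > 0`, `K > 0`, and let `A` be a set of primes with
`|#{p ∈ A : p ≤ t} - κ t/log t| ≤ K t/(log t)^{1+δ}` for all `t ≥ 2`.  Then
the series `Σ_{p ∈ A} p^{-s}` converges for every real `s > 1` and the limit
`lim_{s → 1⁺} (Σ_{p ∈ A} p^{-s} - κ log(1/(s-1)))` exists and is finite. -/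
theorem stmt_12 (κ δ K : ℝ) (hκ0 : 0 ≤ κ) (hκ1 : κ ≤ 1) (hδ : 0 < δ) (hK : 0 < K)
    (A : Set ℕ) (hA : ∀ p ∈ A, Nat.Prime p)
    (hcount : ∀ t : ℝ, 2 ≤ t →
      |(Set.ncard {p : ℕ | p ∈ A ∧ (p : ℝ) ≤ t} : ℝ) - κ * t / Real.log t| ≤
        K * t / Real.log t ^ (1 + δ)) :
    (∀ s : ℝ, 1 < s → Summable (fun p : A => ((p : ℕ) : ℝ) ^ (-s))) ∧
    ∃ ℓ : ℝ, Filter.Tendsto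
      (fun s : ℝ => (∑' p : A, ((p : ℕ) : ℝ) ^ (-s)) - κ * Real.log (1 / (s - 1)))
      (nhdsWithin 1 (Set.Ioi 1)) (nhds ℓ) :=
  stmt_12_general κ δ K hδ A hA hcount
end

section
/- There is an absolute constant C′ > 0 with the following property. Let p ≥ 3 be a prime, C > 0, and x a real number with p²·log p ≤ x and x/p ≥ 16. Let A be a set of primes such that #{ q ∈ A : q ≤ t } ≤ C·t/( p·log(t/p²) ) for all t ∈ [p² log p, x]. Then Σ_{q ∈ A, p² log p ≤ q ≤ x} 1/q ≤ C′·C·(1/p)·log log (x/p). -/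
set_option maxHeartbeats 1000000


/-- There is an absolute constant `C' > 0` with the following property.  Let
`p ≥ 3` be a prime, `C > 0`, and `x` real with `p² log p ≤ x` and `x/p ≥ 16`.
If `A` is a set of primes with `#{q ∈ A : q ≤ t} ≤ C t/(p log(t/p²))` for all
`t ∈ [p² log p, x]`, then
`Σ_{q ∈ A, p² log p ≤ q ≤ x} 1/q ≤ C' C (1/p) log log (x/p)`. -/
theorem stmt_14 :
    ∃ C' : ℝ, 0 < C' ∧
      ∀ (p : ℕ), p.Prime → 3 ≤ p →
      ∀ (C : ℝ), 0 < C →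
      ∀ (x : ℝ), (p : ℝ) ^ 2 * Real.log p ≤ x → 16 ≤ x / p →
      ∀ (A : Set ℕ), (∀ q ∈ A, Nat.Prime q) →
        (∀ t : ℝ, (p : ℝ) ^ 2 * Real.log p ≤ t → t ≤ x →
          (Set.ncard {q : ℕ | q ∈ A ∧ (q : ℝ) ≤ t} : ℝ) ≤
            C * t / ((p : ℝ) * Real.log (t / (p : ℝ) ^ 2))) →
        ∑' q : {q : ℕ // q ∈ A ∧ (p : ℝ) ^ 2 * Real.log p ≤ (q : ℝ) ∧ (q : ℝ) ≤ x},
            1 / ((q : ℕ) : ℝ) ≤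
          C' * C * (1 / (p : ℝ)) * Real.log (Real.log (x / p)) := by
  classical
  refine ⟨3000, by norm_num, ?_⟩
  intro p hp hp3 C hC x hx1 hx2 A hA hcount
  -- basic facts
  have hpR : (3:ℝ) ≤ (p:ℝ) := by exact_mod_cast hp3
  have hp0 : (0:ℝ) < (p:ℝ) := by linarith
  have hlog3 : (1.001:ℝ) ≤ Real.log 3 := by
    rw [Real.le_log_iff_exp_le (by norm_num)]
    have h1 : Real.exp 1.001 = Real.exp 1 * Real.exp 0.001 := by
      rw [← Real.exp_add]; norm_num
    have h2 : Real.exp 0.001 ≤ 1/(1-0.001) :=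
      Real.exp_bound_div_one_sub_of_interval (by norm_num) (by norm_num)
    have h3 := Real.exp_one_lt_d9
    rw [h1]
    nlinarith [Real.exp_pos (1:ℝ), Real.exp_pos (0.001:ℝ)]
  have hlogp : (1.001:ℝ) ≤ Real.log p := hlog3.trans (Real.log_le_log (by norm_num) hpR)
  have hlogp0 : (0:ℝ) < Real.log p := by linarith
  set L : ℝ := Real.log (Real.log (p:ℝ)) with hLdef
  have hL : (1/1002 : ℝ) ≤ L := by
    have h1 := Real.one_sub_inv_le_log_of_pos hlogp0
    have h2 : (Real.log p)⁻¹ ≤ (1.001:ℝ)⁻¹ := inv_anti₀ (by norm_num) hlogp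
    have h3 : (1:ℝ)/1002 ≤ 1 - (1.001:ℝ)⁻¹ := by norm_num
    rw [hLdef]; linarith
  have hL0 : (0:ℝ) < L := lt_of_lt_of_le (by norm_num) hL
  have hlog2 : (1/2:ℝ) ≤ Real.log 2 := by have := Real.log_two_gt_d9; linarith
  have hlog2' : (0:ℝ) < Real.log 2 := by linarith
  set m : ℝ := (p:ℝ)^2 * Real.log p with hmdef
  have hm9 : (9:ℝ) ≤ m := by rw [hmdef]; nlinarith
  have hm0 : (0:ℝ) < m := by linarith
  have hpm : (p:ℝ) ≤ m := by rw [hmdef]; nlinarith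
  have hx0 : (0:ℝ) < x := by linarith
  have hxp0 : (0:ℝ) < x / p := by positivity
  have hlogxp : (2.75:ℝ) ≤ Real.log (x/p) := by
    have h16 : Real.log 16 = 4 * Real.log 2 := by
      rw [show (16:ℝ) = 2^(4:ℕ) by norm_num, Real.log_pow]; push_cast; ring
    have h2 := Real.log_two_gt_d9
    have := Real.log_le_log (by norm_num : (0:ℝ) < 16) hx2
    rw [h16] at this; linarith
  have hlogxp0 : (0:ℝ) < Real.log (x/p) := by linarith
  have hΛ : 1 ≤ Real.log (Real.log (x/p)) := by
    have h16 : Real.exp 1 ≤ Real.log (x/p) := by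
      have := Real.exp_one_lt_d9; linarith
    calc (1:ℝ) = Real.log (Real.exp 1) := (Real.log_exp 1).symm
      _ ≤ Real.log (Real.log (x/p)) := Real.log_le_log (Real.exp_pos 1) h16
  set Λ : ℝ := Real.log (Real.log (x/p)) with hΛdef
  -- finiteness and conversion to finset sum
  have hfin : {q : ℕ | q ∈ A ∧ m ≤ (q:ℝ) ∧ (q:ℝ) ≤ x}.Finite := by
    apply Set.Finite.subset (Set.finite_Iic ⌊x⌋₊)
    intro q hq
    simp only [Set.mem_Iic]
    exact Nat.le_floor hq.2.2
  have htsum : ∑' q : {q : ℕ // q ∈ A ∧ m ≤ (q : ℝ) ∧ (q : ℝ) ≤ x}, 1 / ((q : ℕ) : ℝ)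
      = ∑ q ∈ hfin.toFinset, 1 / (q:ℝ) := by
    haveI : Fintype ↥{q : ℕ | q ∈ A ∧ m ≤ (q:ℝ) ∧ (q:ℝ) ≤ x} := hfin.fintype
    show ∑' q : ↥{q : ℕ | q ∈ A ∧ m ≤ (q:ℝ) ∧ (q:ℝ) ≤ x}, 1/((q:ℕ):ℝ) = _
    rw [tsum_fintype]
    rw [show (∑ q ∈ hfin.toFinset, 1 / (q:ℝ))
        = ∑ q ∈ {q : ℕ | q ∈ A ∧ m ≤ (q:ℝ) ∧ (q:ℝ) ≤ x}.toFinset, 1/(q:ℝ) by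
      congr 1; exact Set.Finite.toFinset_eq_toFinset hfin]
    exact Finset.sum_set_coe (f := fun q : ℕ => 1/(q:ℝ))
      (s := {q : ℕ | q ∈ A ∧ m ≤ (q:ℝ) ∧ (q:ℝ) ≤ x})
  rw [htsum]
  set F : Finset ℕ := hfin.toFinset with hFdef
  have hFmem : ∀ q ∈ F, q ∈ A ∧ m ≤ (q:ℝ) ∧ (q:ℝ) ≤ x := by
    intro q hq; rwa [hFdef, Set.Finite.mem_toFinset] at hq
  have hxm1 : (1:ℝ) ≤ x/m := (one_le_div hm0).mpr hx1
  set K : ℕ := ⌊Real.logb 2 (x/m)⌋₊ with hKdef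
  set kf : ℕ → ℕ := fun q => ⌊Real.logb 2 ((q:ℝ)/m)⌋₊ with hkfdef
  have hmaps : ∀ q ∈ F, kf q ∈ Finset.range (K+1) := by
    intro q hq
    obtain ⟨_, hq1, hq2⟩ := hFmem q hq
    simp only [Finset.mem_range, Nat.lt_succ_iff]
    apply Nat.floor_mono
    apply Real.logb_le_logb_of_le (by norm_num : (1:ℝ) < 2)
      (div_pos (lt_of_lt_of_le hm0 hq1) hm0)
    gcongr
  -- fiberwise decomposition
  rw [← Finset.sum_fiberwise_of_maps_to hmaps (fun q => 1/(q:ℝ))]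
  -- per-bucket bound
  have hbucket : ∀ k ∈ Finset.range (K+1),
      ∑ q ∈ F.filter (fun q => kf q = k), 1/(q:ℝ)
        ≤ (2*C/(p:ℝ)) * (1/((k:ℝ)*Real.log 2 + L)) := by
    intro k _
    have hd0 : (0:ℝ) < (k:ℝ)*Real.log 2 + L := by
      have : (0:ℝ) ≤ (k:ℝ)*Real.log 2 := mul_nonneg (Nat.cast_nonneg k) hlog2'.le
      linarith
    rcases Finset.eq_empty_or_nonempty (F.filter (fun q => kf q = k)) with he | hne
    · rw [he, Finset.sum_empty]; positivity
    set P : ℝ := (2:ℝ)^(k:ℕ) with hPdef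
    have hP1 : (1:ℝ) ≤ P := one_le_pow₀ (by norm_num)
    have hP0 : (0:ℝ) < P := by positivity
    have hPm0 : (0:ℝ) < P*m := by positivity
    -- facts about elements of the bucket
    have hfact : ∀ q ∈ F.filter (fun q => kf q = k),
        q ∈ A ∧ P*m ≤ (q:ℝ) ∧ (q:ℝ) ≤ x ∧ (q:ℝ) < 2*P*m := by
      intro q hq
      rw [Finset.mem_filter] at hq
      obtain ⟨hqF, hqk⟩ := hq
      simp only [hkfdef] at hqk
      obtain ⟨hqA, hq1, hq2⟩ := hFmem q hqF
      have hq0 : (0:ℝ) < (q:ℝ) := lt_of_lt_of_le hm0 hq1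
      have hqm0 : (0:ℝ) < (q:ℝ)/m := div_pos hq0 hm0
      have hqm1 : (1:ℝ) ≤ (q:ℝ)/m := (one_le_div hm0).mpr hq1
      have hlb : (k:ℝ) ≤ Real.logb 2 ((q:ℝ)/m) := by
        rw [← hqk]
        exact Nat.floor_le (Real.logb_nonneg (by norm_num) hqm1)
      have hub : Real.logb 2 ((q:ℝ)/m) < (k:ℝ)+1 := by
        rw [← hqk]
        exact Nat.lt_floor_add_one _
      have hlow : P*m ≤ (q:ℝ) := by
        have := (Real.le_logb_iff_rpow_le (by norm_num : (1:ℝ) < 2) hqm0).mp hlb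
        rw [Real.rpow_natCast] at this
        rw [← hPdef] at this
        calc P*m = (P)*m := rfl
          _ ≤ ((q:ℝ)/m)*m := by gcongr
          _ = (q:ℝ) := by field_simp
      have hhigh : (q:ℝ) < 2*P*m := by
        have h2 := (Real.logb_lt_iff_lt_rpow (by norm_num : (1:ℝ) < 2) hqm0).mp hub
        have h3 : (2:ℝ)^((k:ℝ)+1) = 2*P := by
          rw [Real.rpow_add (by norm_num), Real.rpow_one, Real.rpow_natCast, ← hPdef]; ring
        rw [h3] at h2
        calc (q:ℝ) = ((q:ℝ)/m)*m := by field_simp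
          _ < (2*P)*m := by gcongr
          _ = 2*P*m := by ring
      exact ⟨hqA, hlow, hq2, hhigh⟩
    obtain ⟨q₀, hq₀⟩ := hne
    have hPmx : P*m ≤ x := le_trans (hfact q₀ hq₀).2.1 (hfact q₀ hq₀).2.2.1
    set T : ℝ := min (2*P*m) x with hTdef
    have hTm : m ≤ T := le_min (by nlinarith) hx1
    have hTx : T ≤ x := min_le_right _ _
    have hTlow : P*m ≤ T := le_min (by nlinarith) hPmx
    have hTup : T ≤ 2*P*m := min_le_left _ _
    have hT0 : (0:ℝ) < T := lt_of_lt_of_le hm0 hTm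
    have hlogT : (k:ℝ)*Real.log 2 + L ≤ Real.log (T/(p:ℝ)^2) := by
      have h1 : P * Real.log p ≤ T/(p:ℝ)^2 := by
        rw [le_div_iff₀ (by positivity)]
        calc P * Real.log p * (p:ℝ)^2 = P * m := by rw [hmdef]; ring
          _ ≤ T := hTlow
      have h2 : Real.log (P * Real.log p) = (k:ℝ)*Real.log 2 + L := by
        rw [Real.log_mul (by positivity) (by linarith), hPdef, Real.log_pow, hLdef]
      rw [← h2]
      exact Real.log_le_log (by positivity) h1
    have hlogT0 : (0:ℝ) < Real.log (T/(p:ℝ)^2) := lt_of_lt_of_le hd0 hlogT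
    -- cardinality bound
    have hfin2 : {q : ℕ | q ∈ A ∧ (q:ℝ) ≤ T}.Finite := by
      apply Set.Finite.subset (Set.finite_Iic ⌊T⌋₊)
      intro q hq
      simp only [Set.mem_Iic]
      exact Nat.le_floor hq.2
    have hcard : ((F.filter (fun q => kf q = k)).card : ℝ)
        ≤ C*T/((p:ℝ) * Real.log (T/(p:ℝ)^2)) := by
      refine le_trans ?_ (hcount T hTm hTx)
      have hsub : ↑(F.filter (fun q => kf q = k)) ⊆ {q : ℕ | q ∈ A ∧ (q:ℝ) ≤ T} := by
        intro q hq
        rw [Finset.mem_coe] at hq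
        obtain ⟨hqA, _, hq2, hq3⟩ := hfact q hq
        exact ⟨hqA, le_min hq3.le hq2⟩
      have := Set.ncard_le_ncard hsub hfin2
      rw [Set.ncard_coe_finset] at this
      exact_mod_cast this
    -- sum bound
    calc ∑ q ∈ F.filter (fun q => kf q = k), 1/(q:ℝ)
        ≤ (F.filter (fun q => kf q = k)).card • (1/(P*m)) := by
          apply Finset.sum_le_card_nsmul
          intro q hq
          have := (hfact q hq).2.1
          exact one_div_le_one_div_of_le hPm0 this
      _ = ((F.filter (fun q => kf q = k)).card : ℝ) * (1/(P*m)) := by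
          rw [nsmul_eq_mul]
      _ ≤ (C*T/((p:ℝ) * Real.log (T/(p:ℝ)^2))) * (1/(P*m)) := by
          apply mul_le_mul_of_nonneg_right hcard (by positivity)
      _ ≤ (C*(2*P*m)/((p:ℝ) * ((k:ℝ)*Real.log 2 + L))) * (1/(P*m)) := by
          apply mul_le_mul_of_nonneg_right ?_ (by positivity)
          gcongr
      _ = (2*C/(p:ℝ)) * (1/((k:ℝ)*Real.log 2 + L)) := by
          field_simp
  -- final assembly
  calc ∑ k ∈ Finset.range (K+1), ∑ q ∈ F.filter (fun q => kf q = k), 1/(q:ℝ)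
      ≤ ∑ k ∈ Finset.range (K+1), (2*C/(p:ℝ)) * (1/((k:ℝ)*Real.log 2 + L)) :=
        Finset.sum_le_sum hbucket
    _ = (2*C/(p:ℝ)) * ∑ k ∈ Finset.range (K+1), 1/((k:ℝ)*Real.log 2 + L) := by
        rw [Finset.mul_sum]
    _ ≤ (2*C/(p:ℝ)) * (1500 * Λ) := by
        apply mul_le_mul_of_nonneg_left ?_ (by positivity)
        -- tail bound
        have hKlog : Real.log K ≤ 1 + Λ := by
          rcases Nat.eq_zero_or_pos K with hK0 | hK1
          · rw [hK0]; simp; linarith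
          · have hK1R : (1:ℝ) ≤ (K:ℝ) := by exact_mod_cast hK1
            have hKle : (K:ℝ) ≤ Real.logb 2 (x/m) :=
              Nat.floor_le (Real.logb_nonneg (by norm_num) hxm1)
            have hxmxp : x/m ≤ x/p := by
              apply div_le_div_of_nonneg_left hx0.le hp0 hpm
            have hlogb_le : Real.logb 2 (x/m) ≤ 2 * Real.log (x/p) := by
              rw [Real.logb, div_le_iff₀ hlog2']
              have h1 : Real.log (x/m) ≤ Real.log (x/p) :=
                Real.log_le_log (by positivity) hxmxp
              have h2 : (0:ℝ) ≤ Real.log (x/m) := Real.log_nonneg hxm1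
              nlinarith
            have : Real.log K ≤ Real.log (2 * Real.log (x/p)) :=
              Real.log_le_log (by linarith) (by linarith)
            rw [Real.log_mul (by norm_num) (by linarith)] at this
            have hl2 : Real.log 2 ≤ 1 := by
              have := Real.log_two_lt_d9; linarith
            rw [hΛdef]; linarith
        have hterm : ∀ k ∈ Finset.range K,
            1/(((k:ℕ)+1:ℝ)*Real.log 2 + L) ≤ 2 * (1/((k:ℝ)+1)) := by
          intro k _
          have hk1 : (0:ℝ) < (k:ℝ)+1 := by positivity
          have h1 : ((k:ℝ)+1)*(1/2) ≤ ((k:ℝ)+1)*Real.log 2 + L := by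
            nlinarith
          calc 1/(((k:ℕ)+1:ℝ)*Real.log 2 + L) ≤ 1/(((k:ℝ)+1)*(1/2)) := by
                push_cast
                exact one_div_le_one_div_of_le (by positivity) h1
            _ = 2 * (1/((k:ℝ)+1)) := by field_simp
        have hharm : ∑ k ∈ Finset.range K, (1/((k:ℝ)+1)) ≤ 1 + Real.log K := by
          have h1 : ∑ k ∈ Finset.range K, (1/((k:ℝ)+1)) = ((harmonic K : ℚ) : ℝ) := by
            rw [harmonic]
            push_cast
            apply Finset.sum_congr rfl
            intro k _
            rw [one_div]
          rw [h1]
          exact harmonic_le_one_add_log K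
        calc ∑ k ∈ Finset.range (K+1), 1/((k:ℝ)*Real.log 2 + L)
            = (∑ k ∈ Finset.range K, 1/((((k:ℕ)+1):ℝ)*Real.log 2 + L))
              + 1/(((0:ℕ):ℝ)*Real.log 2 + L) := by
              rw [Finset.sum_range_succ']
              congr 1
              apply Finset.sum_congr rfl
              intro k _
              push_cast
              ring_nf
          _ ≤ (∑ k ∈ Finset.range K, 2 * (1/((k:ℝ)+1))) + 1002 := by
              gcongr with k hk
              · exact hterm k hk
              · calc 1/(((0:ℕ):ℝ)*Real.log 2 + L) = 1/L := by norm_num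
                  _ ≤ 1/(1/1002) := one_div_le_one_div_of_le (by norm_num) hL
                  _ = 1002 := by norm_num
          _ = 2 * (∑ k ∈ Finset.range K, (1/((k:ℝ)+1))) + 1002 := by
              rw [Finset.mul_sum]
          _ ≤ 2 * (1 + Real.log K) + 1002 := by
              have := hharm; linarith
          _ ≤ 2 * (1 + (1 + Λ)) + 1002 := by linarith
          _ ≤ 1500 * Λ := by linarith
    _ = 3000 * C * (1/(p:ℝ)) * Λ := by ring
end
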